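/- arXiv:1611.05844 — 7 statements merged into one kernel-verified Lean document; each statement's English description precedes it below -/
import Mathlib

section
/- Let x be a nilpotent endomorphism of a finite-dimensional complex vector space V with Jordan type λ, and let L ⊆ ker(x) be a one-dimensional subspace. If j is maximal such that L ⊆ ker(x) ∩ im(x^{j-1}), then the Jordan type of the induced endomorphism of V/L is the partition obtained from λ by removing one box from the bottom of the j-th column (i.e., decreasing by 1 the smallest part of λ that is ≥ j). -/
/-! Write `x̄` for the map induced on `V/L`. The kernel of `x̄^k` is `(x^k)⁻¹(L) / L`, and rank–nullity
for `x^k` restricted to `(x^k)⁻¹(L)` gives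
`dim ker x̄^k + dim L = dim ker x^k + dim (L ∩ im x^k)`.
Since `L` is a line and the images of the powers of `x` decrease, `L ∩ im x^k` is `L` for `k < j`
and `0` for `k ≥ j`. -/

open Module LinearMap

namespace Submodule

variable {K V V₂ : Type*} [Field K] [AddCommGroup V] [Module K V] [FiniteDimensional K V]
  [AddCommGroup V₂] [Module K V₂]

theorem finrank_map_add_finrank_inf_ker (f : V →ₗ[K] V₂) (p : Submodule K V) :
    finrank K (p.map f) + finrank K ↥(p ⊓ ker f) = finrank K p := by
  have h := (f.domRestrict p).finrank_range_add_finrank_ker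
  rwa [range_domRestrict, ker_domRestrict, ← finrank_map_subtype_eq, map_comap_subtype] at h

theorem finrank_comap (f : V →ₗ[K] V₂) (p : Submodule K V₂) :
    finrank K (p.comap f) = finrank K (ker f) + finrank K ↥(p ⊓ range f) := by
  have h := finrank_map_add_finrank_inf_ker f (p.comap f)
  rw [map_comap_eq, inf_eq_right.mpr (ker_le_comap f), inf_comm] at h
  omega

theorem finrank_ker_mapQ_add_finrank (p : Submodule K V) (f : V →ₗ[K] V) (h : p ≤ p.comap f) :
    finrank K (ker (p.mapQ p f h)) + finrank K p = finrank K (ker f) + finrank K ↥(p ⊓ range f) := by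
  have h' := finrank_map_add_finrank_inf_ker p.mkQ (p.comap f)
  rw [ker_mkQ, inf_eq_right.mpr h, finrank_comap] at h'
  rwa [ker_mapQ]

theorem finrank_inf_of_finrank_eq_one {L : Submodule K V} (hL : finrank K L = 1)
    (W : Submodule K V) [Decidable (L ≤ W)] : finrank K ↥(L ⊓ W) = if L ≤ W then 1 else 0 := by
  split_ifs with hLW
  · rwa [inf_eq_left.mpr hLW]
  · have := finrank_lt_finrank_of_lt (inf_lt_left.mpr hLW)
    omega

end Submodule

theorem jordanType_quotient_by_line_general
    (V : Type*) [AddCommGroup V] [Module ℂ V] [FiniteDimensional ℂ V]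
    (x : Module.End ℂ V)
    (L : Submodule ℂ V) (hL1 : Module.finrank ℂ L = 1)
    (j : ℕ)
    (hjle : L ≤ LinearMap.range (x ^ (j - 1)))
    (hjmax : ¬ L ≤ LinearMap.range (x ^ j))
    (hmap : L ≤ L.comap x) :
    ∀ k : ℕ,
      Module.finrank ℂ (LinearMap.ker ((Submodule.mapQ L L x hmap) ^ k)) =
        Module.finrank ℂ (LinearMap.ker (x ^ k)) - (if j ≤ k then 1 else 0) := by
  intro k
  have hLrange : L ≤ range (x ^ k) ↔ ¬ j ≤ k :=
    ⟨fun h hjk ↦ hjmax (h.trans (x.iterateRange.monotone hjk)),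
      fun h ↦ hjle.trans (x.iterateRange.monotone (by omega))⟩
  have key := L.finrank_ker_mapQ_add_finrank (x ^ k) (L.le_comap_pow_of_le_comap hmap k)
  classical
  rw [← L.mapQ_pow hmap k]
  rw [hL1, Submodule.finrank_inf_of_finrank_eq_one hL1, hLrange] at key
  split_ifs at key ⊢ <;> omega

/-- Let `x` be a nilpotent endomorphism of a finite-dimensional complex
vector space `V` and `L ⊆ ker x` a line.  If `j ≥ 1` is maximal such that
`L ⊆ ker x ∩ im (x^(j-1))`, then the Jordan type of the induced endomorphism of `V/L`
is obtained from that of `x` by removing the box at the bottom of the `j`-th column.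
(Equivalently, since Jordan types are determined by the dimensions of kernels of powers:
`dim ker(x̄^k) = dim ker(x^k) - 1` for `k ≥ j` and `= dim ker(x^k)` for `k < j`.) -/
theorem jordanType_quotient_by_line
    (V : Type*) [AddCommGroup V] [Module ℂ V] [FiniteDimensional ℂ V]
    (x : Module.End ℂ V) (hx : IsNilpotent x)
    (L : Submodule ℂ V) (hL1 : Module.finrank ℂ L = 1)
    (hLker : L ≤ LinearMap.ker x)
    (j : ℕ) (hj : 1 ≤ j)
    (hjle : L ≤ LinearMap.range (x ^ (j - 1)))
    (hjmax : ¬ L ≤ LinearMap.range (x ^ j))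
    (hmap : L ≤ L.comap x) :
    ∀ k : ℕ,
      Module.finrank ℂ (LinearMap.ker ((Submodule.mapQ L L x hmap) ^ k)) =
        Module.finrank ℂ (LinearMap.ker (x ^ k)) - (if j ≤ k then 1 else 0) :=
  jordanType_quotient_by_line_general V x L hL1 j hjle hjmax hmap
end

section
/- Let x be a nilpotent endomorphism of a finite-dimensional complex vector space V with Jordan type λ, and let W ⊆ V be a codimension-1 subspace with im(x) ⊆ W. If j is maximal such that W ⊇ im(x) + ker(x^{j-1}), then the Jordan type of x restricted to W is the partition obtained from λ by removing the corner box at the bottom of the j-th column. -/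
/-- Let `x` be a nilpotent endomorphism of a finite-dimensional complex
vector space `V` with Jordan type `λ`, and `W ⊆ V` a codimension-1 subspace containing
`im x`.  If `j ≥ 1` is maximal such that `W ⊇ im x + ker (x^(j-1))`, then the Jordan type
of `x` restricted to `W` is obtained from `λ` by removing the corner box at the bottom of
the `j`-th column.  (Equivalently, in terms of kernel dimensions of powers:
`dim ker((x|_W)^k) = dim ker(x^k) - 1` for `k ≥ j` and `= dim ker(x^k)` otherwise.) -/
theorem jordanType_restrict_to_hyperplane
    (V : Type*) [AddCommGroup V] [Module ℂ V] [FiniteDimensional ℂ V]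
    (x : Module.End ℂ V) (hx : IsNilpotent x)
    (W : Submodule ℂ V)
    (hcodim : Module.finrank ℂ W + 1 = Module.finrank ℂ V)
    (hrange : LinearMap.range x ≤ W)
    (hW : ∀ v ∈ W, x v ∈ W)
    (j : ℕ) (hj : 1 ≤ j)
    (hjle : LinearMap.range x ⊔ LinearMap.ker (x ^ (j - 1)) ≤ W)
    (hjmax : ¬ LinearMap.range x ⊔ LinearMap.ker (x ^ j) ≤ W) :
    ∀ k : ℕ,
      Module.finrank ℂ (LinearMap.ker ((x.restrict hW) ^ k)) =
        Module.finrank ℂ (LinearMap.ker (x ^ k)) - (if j ≤ k then 1 else 0) := by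
  intro k
  set K := LinearMap.ker (x ^ k) with hK
  have h1 : LinearMap.ker ((x.restrict hW) ^ k) = K.comap W.subtype := by
    rw [Module.End.pow_restrict k hW, LinearMap.ker_restrict]
  have heq : K.comap W.subtype = (K ⊓ W).comap W.subtype := by
    ext v
    simp only [Submodule.mem_comap, Submodule.mem_inf]
    exact ⟨fun h => ⟨h, v.2⟩, fun h => h.1⟩
  have h2 : Module.finrank ℂ (LinearMap.ker ((x.restrict hW) ^ k)) =
      Module.finrank ℂ ↥(K ⊓ W) := by
    rw [h1, heq]
    exact (Submodule.comapSubtypeEquivOfLe inf_le_right).finrank_eq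
  rw [h2]
  by_cases hk : j ≤ k
  · simp only [hk, if_true]
    have hker_j : ¬ LinearMap.ker (x ^ j) ≤ W := fun h => hjmax (sup_le hrange h)
    have hmono : LinearMap.ker (x ^ j) ≤ K := by
      intro v hv
      rw [LinearMap.mem_ker] at hv ⊢
      have hxk : x ^ k = x ^ (k - j) * x ^ j := by rw [← pow_add, Nat.sub_add_cancel hk]
      rw [hxk, Module.End.mul_apply, hv, map_zero]
    have hker_k : ¬ K ≤ W := fun h => hker_j (hmono.trans h)
    have hlt : W < K ⊔ W := lt_of_le_of_ne le_sup_right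
      (fun h => hker_k (h ▸ le_sup_left))
    have htop : K ⊔ W = ⊤ := by
      apply Submodule.eq_top_of_finrank_eq
      have hle : Module.finrank ℂ ↥(K ⊔ W) ≤ Module.finrank ℂ V :=
        Submodule.finrank_le _
      have hgt : Module.finrank ℂ ↥W < Module.finrank ℂ ↥(K ⊔ W) :=
        Submodule.finrank_lt_finrank_of_lt hlt
      omega
    have hsum := Submodule.finrank_sup_add_finrank_inf_eq K W
    rw [htop] at hsum
    rw [finrank_top] at hsum
    omega
  · simp only [hk, if_false]
    have hle : K ≤ W := by
      have h1 : K ≤ LinearMap.ker (x ^ (j - 1)) := by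
        intro v hv
        rw [LinearMap.mem_ker] at hv ⊢
        have hkj : k ≤ j - 1 := by omega
        have hxk : x ^ (j - 1) = x ^ (j - 1 - k) * x ^ k := by
          rw [← pow_add, Nat.sub_add_cancel hkj]
        rw [hxk, Module.End.mul_apply, hv, map_zero]
      exact h1.trans (le_sup_right.trans hjle)
    rw [inf_eq_left.mpr hle]
    omega
end

section
/- The number of standard Young bitableaux satisfies Σ_{(μ,ν) ∈ Q_n} |SYB(μ,ν)|² = 2^n · n!, where Q_n is the set of bipartitions of n and 2^n · n! is the order of the Weyl group of type C_n. -/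
/-- A partition encoded as an antitone, eventually-zero function `ℕ → ℕ` (indexed from 0). -/
def IsPartitionFun (f : ℕ → ℕ) : Prop := Antitone f ∧ ∃ K, ∀ i ≥ K, f i = 0

/-- `q` is obtained from the bipartition `p` by adding a single box to one of the two
partitions. -/
def AddsBox (p q : (ℕ → ℕ) × (ℕ → ℕ)) : Prop :=
  ∃ i, (q.1 = Function.update p.1 i (p.1 i + 1) ∧ q.2 = p.2) ∨
       (q.1 = p.1 ∧ q.2 = Function.update p.2 i (p.2 i + 1))

/-- Bipartitions of `n`: pairs of partitions whose sizes add up to `n`. -/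
def BipartitionOf (n : ℕ) : Type :=
  {p : (ℕ → ℕ) × (ℕ → ℕ) //
    IsPartitionFun p.1 ∧ IsPartitionFun p.2 ∧ (∑ᶠ i, p.1 i) + (∑ᶠ i, p.2 i) = n}

/-- Standard Young bitableaux of shape `p`, encoded equivalently as maximal chains of
bipartitions from `(∅,∅)` to `p`, each step adding a single box. -/
def SYBchain (n : ℕ) (p : (ℕ → ℕ) × (ℕ → ℕ)) : Type :=
  {c : Fin (n + 1) → (ℕ → ℕ) × (ℕ → ℕ) //
    c 0 = (fun _ => 0, fun _ => 0) ∧ c (Fin.last n) = p ∧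
    (∀ i, IsPartitionFun (c i).1 ∧ IsPartitionFun (c i).2) ∧
    ∀ i : Fin n, AddsBox (c i.castSucc) (c i.succ)}

namespace SYB8

open Function Finset

abbrev PP : Type := (ℕ → ℕ) × (ℕ → ℕ)



noncomputable def sz (f : ℕ → ℕ) : ℕ := ∑ᶠ i, f i

lemma sz_eq_sum {f : ℕ → ℕ} {K : ℕ} (h : ∀ i ≥ K, f i = 0) :
    sz f = ∑ i ∈ Finset.range K, f i := by
  apply finsum_eq_sum_of_support_subset
  intro i hi
  simp only [Function.mem_support] at hi
  simp only [Finset.coe_range, Set.mem_Iio]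
  by_contra hK
  exact hi (h i (le_of_not_gt hK))

lemma sz_update_add {f : ℕ → ℕ} {K : ℕ} (h : ∀ i ≥ K, f i = 0) (i : ℕ) :
    sz (Function.update f i (f i + 1)) = sz f + 1 := by
  set L := max K (i + 1) with hL
  have hiL : i ∈ Finset.range L := by
    simp [hL, Nat.lt_succ_iff]
  have h1 : ∀ j ≥ L, f j = 0 := fun j hj => h j (le_trans (le_max_left _ _) hj)
  have h2 : ∀ j ≥ L, Function.update f i (f i + 1) j = 0 := by
    intro j hj
    rw [Function.update_of_ne, h1 j hj]
    omega
  rw [sz_eq_sum h2, sz_eq_sum h1, Finset.sum_update_of_mem hiL,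
    ← Finset.add_sum_erase _ f hiL, Finset.erase_eq]
  omega

lemma sz_lt_of_le {f g : ℕ → ℕ} {K : ℕ} (hg : ∀ i ≥ K, g i = 0)
    (hle : ∀ i, f i ≤ g i) (hne : f ≠ g) : sz f < sz g := by
  have hf : ∀ i ≥ K, f i = 0 := fun i hi => Nat.le_zero.1 (hg i hi ▸ hle i)
  obtain ⟨j, hj⟩ : ∃ j, f j ≠ g j := Function.ne_iff.1 hne
  have hjK : j < K := by
    by_contra hc
    exact hj (by rw [hf j (le_of_not_gt hc), hg j (le_of_not_gt hc)])
  rw [sz_eq_sum hf, sz_eq_sum hg]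
  apply Finset.sum_lt_sum (fun i _ => hle i) ⟨j, Finset.mem_range.2 hjK, lt_of_le_of_ne (hle j) hj⟩

lemma eq_of_le_of_sz_eq {f g : ℕ → ℕ} {K : ℕ} (hg : ∀ i ≥ K, g i = 0)
    (hle : ∀ i, f i ≤ g i) (hsz : sz f = sz g) : f = g := by
  by_contra hne
  exact absurd hsz (Nat.ne_of_lt (sz_lt_of_le hg hle hne))

lemma partition_vanish {f : ℕ → ℕ} (hf : IsPartitionFun f) {n : ℕ} (hsz : sz f ≤ n) :
    ∀ i ≥ n, f i = 0 := by
  intro i hi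
  by_contra hne
  have h1 : ∀ j ≤ i, 1 ≤ f j := fun j hj => Nat.one_le_iff_ne_zero.2
    (fun h0 => hne (Nat.le_zero.1 (h0 ▸ hf.1 hj)))
  obtain ⟨K, hK⟩ := hf.2
  have hK' : ∀ j ≥ max K (i+1), f j = 0 := fun j hj => hK j (le_trans (le_max_left _ _) hj)
  have : i + 1 ≤ sz f := by
    rw [sz_eq_sum hK']
    calc i + 1 = ∑ j ∈ Finset.range (i+1), 1 := by simp
    _ ≤ ∑ j ∈ Finset.range (i+1), f j :=
        Finset.sum_le_sum (fun j hj => h1 j (Nat.lt_succ_iff.1 (Finset.mem_range.1 hj)))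
    _ ≤ ∑ j ∈ Finset.range (max K (i+1)), f j :=
        Finset.sum_le_sum_of_subset (Finset.range_subset_range.2 (le_max_right _ _))
  omega




def addAt (f : ℕ → ℕ) (i : ℕ) : ℕ → ℕ := Function.update f i (f i + 1)

def subAt (f : ℕ → ℕ) (j : ℕ) : ℕ → ℕ := Function.update f j (f j - 1)

def Addable (f : ℕ → ℕ) (i : ℕ) : Prop := i = 0 ∨ f (i - 1) > f i

def Removable (f : ℕ → ℕ) (j : ℕ) : Prop := f j > f (j + 1)

@[simp] lemma addAt_self (f : ℕ → ℕ) (i : ℕ) : addAt f i i = f i + 1 :=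
  Function.update_self _ _ _

lemma addAt_ne (f : ℕ → ℕ) {i j : ℕ} (h : j ≠ i) : addAt f i j = f j :=
  Function.update_of_ne h _ _

@[simp] lemma subAt_self (f : ℕ → ℕ) (j : ℕ) : subAt f j j = f j - 1 :=
  Function.update_self _ _ _

lemma subAt_ne (f : ℕ → ℕ) {i j : ℕ} (h : i ≠ j) : subAt f j i = f i :=
  Function.update_of_ne h _ _

lemma le_addAt (f : ℕ → ℕ) (i : ℕ) : ∀ j, f j ≤ addAt f i j := by
  intro j
  rcases eq_or_ne j i with rfl | h
  · simp
  · rw [addAt_ne f h]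

lemma subAt_le (f : ℕ → ℕ) (j : ℕ) : ∀ i, subAt f j i ≤ f i := by
  intro i
  rcases eq_or_ne i j with rfl | h
  · simp
  · rw [subAt_ne f h]

lemma addAt_injective (f : ℕ → ℕ) {i j : ℕ} (h : addAt f i = addAt f j) : i = j := by
  by_contra hne
  have := congrFun h i
  rw [addAt_self, addAt_ne f hne] at this
  omega

lemma addAt_left_injective {f g : ℕ → ℕ} {i : ℕ} (h : addAt f i = addAt g i) : f = g := by
  funext j
  rcases eq_or_ne j i with rfl | hj
  · have := congrFun h j
    rw [addAt_self, addAt_self] at this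
    omega
  · have := congrFun h j
    rwa [addAt_ne f hj, addAt_ne g hj] at this

lemma addAt_ne_self (f : ℕ → ℕ) (i : ℕ) : addAt f i ≠ f := by
  intro h
  have := congrFun h i
  rw [addAt_self] at this
  omega

lemma subAt_addAt (f : ℕ → ℕ) (i : ℕ) : subAt (addAt f i) i = f := by
  funext j
  rcases eq_or_ne j i with rfl | h
  · rw [subAt_self, addAt_self]
    omega
  · rw [subAt_ne _ h, addAt_ne _ h]

lemma addAt_subAt {f : ℕ → ℕ} {j : ℕ} (h : 1 ≤ f j) : addAt (subAt f j) j = f := by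
  funext i
  rcases eq_or_ne i j with rfl | hi
  · rw [addAt_self, subAt_self]
    omega
  · rw [addAt_ne _ hi, subAt_ne _ hi]

lemma isPartitionFun_addAt {f : ℕ → ℕ} (hf : IsPartitionFun f) {i : ℕ} (h : Addable f i) :
    IsPartitionFun (addAt f i) := by
  constructor
  · apply antitone_nat_of_succ_le
    intro k
    rcases eq_or_ne (k + 1) i with hk | hk
    · have hi0 : i ≠ 0 := by omega
      have hki : k ≠ i := by omega
      rcases h with h | h
      · exact absurd h hi0
      · rw [addAt_ne f hki, hk, addAt_self]
        have : i - 1 = k := by omega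
        rw [this] at h
        omega
    · rw [addAt_ne f hk]
      rcases eq_or_ne k i with rfl | hk'
      · rw [addAt_self]
        have := hf.1 (show k ≤ k + 1 by omega)
        omega
      · rw [addAt_ne f hk']
        exact hf.1 (show k ≤ k + 1 by omega)
  · obtain ⟨K, hK⟩ := hf.2
    refine ⟨max K (i + 1), fun j hj => ?_⟩
    rw [addAt_ne f (by omega : j ≠ i)]
    exact hK j (le_trans (le_max_left _ _) hj)

lemma addable_of_isPartitionFun_addAt {f : ℕ → ℕ} (hf : IsPartitionFun f) {i : ℕ}
    (hq : IsPartitionFun (addAt f i)) : Addable f i := by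
  rcases Nat.eq_zero_or_pos i with rfl | hi
  · exact Or.inl rfl
  · right
    have h1 := hq.1 (show i - 1 ≤ i by omega)
    rw [addAt_self, addAt_ne f (by omega : i - 1 ≠ i)] at h1
    omega

lemma isPartitionFun_subAt {f : ℕ → ℕ} (hf : IsPartitionFun f) {j : ℕ} (h : Removable f j) :
    IsPartitionFun (subAt f j) := by
  constructor
  · apply antitone_nat_of_succ_le
    intro k
    rcases eq_or_ne k j with rfl | hk
    · rw [subAt_self, subAt_ne _ (by omega : k + 1 ≠ k)]
      have : f k > f (k+1) := h
      omega
    · rw [subAt_ne _ hk]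
      rcases eq_or_ne (k + 1) j with rfl | hk'
      · rw [subAt_self]
        have := hf.1 (show k ≤ k + 1 by omega)
        omega
      · rw [subAt_ne _ hk']
        exact hf.1 (show k ≤ k + 1 by omega)
  · obtain ⟨K, hK⟩ := hf.2
    exact ⟨K, fun i hi => Nat.le_zero.1 ((hK i hi) ▸ subAt_le f j i)⟩

lemma removable_of_isPartitionFun_subAt {f : ℕ → ℕ} (hf : IsPartitionFun f) {j : ℕ}
    (hr : IsPartitionFun (subAt f j)) (hj : 1 ≤ f j) : Removable f j := by
  have h1 := hr.1 (Nat.le_succ j)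
  rw [subAt_self, subAt_ne _ (by omega : j + 1 ≠ j)] at h1
  have := hf.1 (Nat.le_succ j)
  unfold Removable
  omega










def IsBp (n : ℕ) (p : PP) : Prop :=
  IsPartitionFun p.1 ∧ IsPartitionFun p.2 ∧ sz p.1 + sz p.2 = n

lemma addsBox_iff {p q : PP} :
    AddsBox p q ↔ (∃ i, q = (addAt p.1 i, p.2)) ∨ ∃ i, q = (p.1, addAt p.2 i) := by
  constructor
  · rintro ⟨i, h | h⟩
    · exact Or.inl ⟨i, Prod.ext h.1 h.2⟩
    · exact Or.inr ⟨i, Prod.ext h.1 h.2⟩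
  · rintro (⟨i, rfl⟩ | ⟨i, rfl⟩)
    · exact ⟨i, Or.inl ⟨rfl, rfl⟩⟩
    · exact ⟨i, Or.inr ⟨rfl, rfl⟩⟩

lemma addsBox_swap {p q : PP} (h : AddsBox p q) : AddsBox p.swap q.swap := by
  obtain ⟨i, h | h⟩ := h
  · exact ⟨i, Or.inr ⟨h.2, h.1⟩⟩
  · exact ⟨i, Or.inl ⟨h.2, h.1⟩⟩

lemma isBp_swap {n : ℕ} {p : PP} (h : IsBp n p) : IsBp n p.swap :=
  ⟨h.2.1, h.1, by rw [← h.2.2]; exact Nat.add_comm _ _⟩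

lemma addsBox_sz2 {p q : PP} (hp1 : IsPartitionFun p.1) (hp2 : IsPartitionFun p.2)
    (h : AddsBox p q) : sz q.1 + sz q.2 = sz p.1 + sz p.2 + 1 := by
  obtain ⟨K1, hK1⟩ := hp1.2
  obtain ⟨K2, hK2⟩ := hp2.2
  obtain ⟨i, ⟨h1, h2⟩ | ⟨h1, h2⟩⟩ := h
  · rw [h1, h2, sz_update_add hK1]
    omega
  · rw [h1, h2, sz_update_add hK2]
    omega

lemma addsBox_le {p q : PP} (h : AddsBox p q) :
    (∀ i, p.1 i ≤ q.1 i) ∧ ∀ i, p.2 i ≤ q.2 i := by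
  have key : ∀ (f : ℕ → ℕ) (i j : ℕ), f j ≤ Function.update f i (f i + 1) j := by
    intro f i j
    rcases eq_or_ne j i with rfl | hj
    · rw [Function.update_self]
      omega
    · rw [Function.update_of_ne hj]
  obtain ⟨i, ⟨h1, h2⟩ | ⟨h1, h2⟩⟩ := h <;> rw [h1, h2]
  · exact ⟨fun j => key _ i j, fun j => le_refl _⟩
  · exact ⟨fun j => le_refl _, fun j => key _ i j⟩




lemma sz_le_sz {f g : ℕ → ℕ} {K : ℕ} (hg : ∀ i ≥ K, g i = 0) (h : ∀ i, f i ≤ g i) :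
    sz f ≤ sz g := by
  rcases eq_or_ne f g with rfl | hne
  · exact le_refl _
  · exact le_of_lt (sz_lt_of_le hg h hne)

lemma pair_eq_of_le_of_sz2 {p q : PP} (hq1 : IsPartitionFun q.1) (hq2 : IsPartitionFun q.2)
    (h1 : ∀ i, p.1 i ≤ q.1 i) (h2 : ∀ i, p.2 i ≤ q.2 i)
    (hsz : sz p.1 + sz p.2 = sz q.1 + sz q.2) : p = q := by
  obtain ⟨K1, hK1⟩ := hq1.2
  obtain ⟨K2, hK2⟩ := hq2.2
  have e1 : sz p.1 ≤ sz q.1 := sz_le_sz hK1 h1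
  have e2 : sz p.2 ≤ sz q.2 := sz_le_sz hK2 h2
  exact Prod.ext (eq_of_le_of_sz_eq hK1 h1 (by omega)) (eq_of_le_of_sz_eq hK2 h2 (by omega))

lemma pair_sz2_lt {p q : PP} (hq1 : IsPartitionFun q.1) (hq2 : IsPartitionFun q.2)
    (h1 : ∀ i, p.1 i ≤ q.1 i) (h2 : ∀ i, p.2 i ≤ q.2 i) (hne : p ≠ q) :
    sz p.1 + sz p.2 < sz q.1 + sz q.2 := by
  obtain ⟨K1, hK1⟩ := hq1.2
  obtain ⟨K2, hK2⟩ := hq2.2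
  have e1 : sz p.1 ≤ sz q.1 := sz_le_sz hK1 h1
  have e2 : sz p.2 ≤ sz q.2 := sz_le_sz hK2 h2
  rcases eq_or_ne p.1 q.1 with hf | hf
  · have : p.2 ≠ q.2 := fun hs => hne (Prod.ext hf hs)
    have := sz_lt_of_le hK2 h2 this
    omega
  · have := sz_lt_of_le hK1 h1 hf
    omega

/-- the coordinatewise sup of two bipartitions -/
def psup (p p' : PP) : PP :=
  (fun i => max (p.1 i) (p'.1 i), fun i => max (p.2 i) (p'.2 i))

def pinf (p p' : PP) : PP :=
  (fun i => min (p.1 i) (p'.1 i), fun i => min (p.2 i) (p'.2 i))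

lemma common_cover_eq_sup {n : ℕ} {p p' q : PP} (hp : IsBp n p) (hp' : IsBp n p')
    (hne : p ≠ p') (hq : IsBp (n + 1) q) (h1 : AddsBox p q) (h2 : AddsBox p' q) :
    q = psup p p' := by
  have l1 := addsBox_le h1
  have l2 := addsBox_le h2
  have hs1 : ∀ i, (psup p p').1 i ≤ q.1 i := fun i => max_le (l1.1 i) (l2.1 i)
  have hs2 : ∀ i, (psup p p').2 i ≤ q.2 i := fun i => max_le (l1.2 i) (l2.2 i)
  have hps : p ≠ psup p p' := by
    intro hE
    apply hne
    have e1 : ∀ i, p'.1 i ≤ p.1 i := by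
      intro i
      have := congrFun (congrArg Prod.fst hE) i
      simp only [psup] at this
      omega
    have e2 : ∀ i, p'.2 i ≤ p.2 i := by
      intro i
      have := congrFun (congrArg Prod.snd hE) i
      simp only [psup] at this
      omega
    exact (pair_eq_of_le_of_sz2 hp.1 hp.2.1 e1 e2 (by rw [hp.2.2, hp'.2.2])).symm
  have hlt : sz p.1 + sz p.2 < sz (psup p p').1 + sz (psup p p').2 := by
    have hsup1 : IsPartitionFun (psup p p').1 := by
      constructor
      · intro a b hab
        exact max_le_max (hp.1.1 hab) (hp'.1.1 hab)
      · obtain ⟨K, hK⟩ := hp.1.2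
        obtain ⟨K', hK'⟩ := hp'.1.2
        exact ⟨max K K', fun i hi => by
          simp only [psup]
          rw [hK i (le_trans (le_max_left _ _) hi), hK' i (le_trans (le_max_right _ _) hi)]
          exact max_self 0⟩
    have hsup2 : IsPartitionFun (psup p p').2 := by
      constructor
      · intro a b hab
        exact max_le_max (hp.2.1.1 hab) (hp'.2.1.1 hab)
      · obtain ⟨K, hK⟩ := hp.2.1.2
        obtain ⟨K', hK'⟩ := hp'.2.1.2
        exact ⟨max K K', fun i hi => by
          simp only [psup]
          rw [hK i (le_trans (le_max_left _ _) hi), hK' i (le_trans (le_max_right _ _) hi)]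
          exact max_self 0⟩
    exact pair_sz2_lt hsup1 hsup2 (fun i => le_max_left _ _) (fun i => le_max_left _ _) hps
  have hle : sz (psup p p').1 + sz (psup p p').2 ≤ sz q.1 + sz q.2 := by
    obtain ⟨K1, hK1⟩ := hq.1.2
    obtain ⟨K2, hK2⟩ := hq.2.1.2
    exact Nat.add_le_add (sz_le_sz hK1 hs1) (sz_le_sz hK2 hs2)
  rw [hp.2.2] at hlt
  rw [hq.2.2] at hle
  have hq3 := hq.2.2
  exact (pair_eq_of_le_of_sz2 hq.1 hq.2.1 hs1 hs2 (by omega)).symm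

lemma common_lower_eq_inf {n : ℕ} {p p' r : PP} (hp : IsBp (n + 1) p) (hp' : IsBp (n + 1) p')
    (hne : p ≠ p') (hr : IsBp n r) (h1 : AddsBox r p) (h2 : AddsBox r p') :
    r = pinf p p' := by
  have l1 := addsBox_le h1
  have l2 := addsBox_le h2
  have hs1 : ∀ i, r.1 i ≤ (pinf p p').1 i := fun i => le_min (l1.1 i) (l2.1 i)
  have hs2 : ∀ i, r.2 i ≤ (pinf p p').2 i := fun i => le_min (l1.2 i) (l2.2 i)
  have hinf1 : IsPartitionFun (pinf p p').1 := by
    constructor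
    · intro a b hab
      exact min_le_min (hp.1.1 hab) (hp'.1.1 hab)
    · obtain ⟨K, hK⟩ := hp.1.2
      exact ⟨K, fun i hi => by simp only [pinf]; rw [hK i hi]; omega⟩
  have hinf2 : IsPartitionFun (pinf p p').2 := by
    constructor
    · intro a b hab
      exact min_le_min (hp.2.1.1 hab) (hp'.2.1.1 hab)
    · obtain ⟨K, hK⟩ := hp.2.1.2
      exact ⟨K, fun i hi => by simp only [pinf]; rw [hK i hi]; omega⟩
  have hps : pinf p p' ≠ p := by
    intro hE
    apply hne
    have e1 : ∀ i, p.1 i ≤ p'.1 i := by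
      intro i
      have := congrFun (congrArg Prod.fst hE) i
      simp only [pinf] at this
      omega
    have e2 : ∀ i, p.2 i ≤ p'.2 i := by
      intro i
      have := congrFun (congrArg Prod.snd hE) i
      simp only [pinf] at this
      omega
    exact pair_eq_of_le_of_sz2 hp'.1 hp'.2.1 e1 e2 (by rw [hp.2.2, hp'.2.2])
  have hlt : sz (pinf p p').1 + sz (pinf p p').2 < sz p.1 + sz p.2 :=
    pair_sz2_lt hp.1 hp.2.1 (fun i => min_le_left _ _) (fun i => min_le_left _ _) hps
  have hle : sz r.1 + sz r.2 ≤ sz (pinf p p').1 + sz (pinf p p').2 := by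
    obtain ⟨K1, hK1⟩ := hinf1.2
    obtain ⟨K2, hK2⟩ := hinf2.2
    exact Nat.add_le_add (sz_le_sz hK1 hs1) (sz_le_sz hK2 hs2)
  rw [hp.2.2] at hlt
  rw [hr.2.2] at hle
  have hr3 := hr.2.2
  exact pair_eq_of_le_of_sz2 hinf1 hinf2 hs1 hs2 (by omega)


lemma swap_ne {p p' : PP} (h : p ≠ p') : p.swap ≠ p'.swap :=
  fun hE => h (Prod.swap_injective hE)

lemma addAt_comm (f : ℕ → ℕ) {i j : ℕ} (h : i ≠ j) :
    addAt (addAt f i) j = addAt (addAt f j) i := by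
  unfold addAt
  simp only [Function.update_of_ne h, Function.update_of_ne (Ne.symm h)]
  rw [Function.update_comm h]

lemma aux_lower {n : ℕ} {p p' q : PP} (hp : IsBp (n + 1) p) (hp' : IsBp (n + 1) p')
    (hne : p ≠ p') {i : ℕ} (E1 : q.1 = addAt p.1 i) (E2 : q.2 = p.2)
    (h2 : AddsBox p' q) : ∃ r, IsBp n r ∧ AddsBox r p ∧ AddsBox r p' := by
  obtain ⟨j, ⟨F1, F2⟩ | ⟨F1, F2⟩⟩ := h2
  · -- both boxes added on the first coordinate
    have hE : addAt p.1 i = addAt p'.1 j := by rw [← E1]; exact F1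
    have h22 : p.2 = p'.2 := by rw [← E2]; exact F2
    have h11 : p.1 ≠ p'.1 := fun hE1 => hne (Prod.ext hE1 h22)
    have hij : i ≠ j := by rintro rfl; exact h11 (addAt_left_injective hE)
    have Ei : p.1 i + 1 = p'.1 i := by
      have := congrFun hE i
      rwa [addAt_self, addAt_ne _ hij] at this
    have Ej : p.1 j = p'.1 j + 1 := by
      have := congrFun hE j
      rwa [addAt_ne _ (Ne.symm hij), addAt_self] at this
    have Epoint : ∀ k, k ≠ i → k ≠ j → p.1 k = p'.1 k := by
      intro k hki hkj
      have := congrFun hE k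
      rwa [addAt_ne _ hki, addAt_ne _ hkj] at this
    have hg1 : 1 ≤ p.1 j := by omega
    have ga : addAt (subAt p.1 j) j = p.1 := addAt_subAt hg1
    have gb : addAt (subAt p.1 j) i = p'.1 := by
      funext k
      rcases eq_or_ne k i with rfl | hki
      · rw [addAt_self, subAt_ne _ hij]
        omega
      · rcases eq_or_ne k j with rfl | hkj
        · rw [addAt_ne _ hki, subAt_self]
          omega
        · rw [addAt_ne _ hki, subAt_ne _ hkj]
          exact Epoint k hki hkj
    have hgpart : IsPartitionFun (subAt p.1 j) := by
      constructor
      · apply antitone_nat_of_succ_le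
        intro k
        rcases eq_or_ne k j with rfl | hkj
        · rw [subAt_self, subAt_ne _ (show k + 1 ≠ k by omega)]
          have hA : p'.1 (k + 1) ≤ p'.1 k := hp'.1.1 (Nat.le_succ k)
          rcases eq_or_ne (k + 1) i with hki | hki
          · rw [← hki] at Ei
            omega
          · have hE2 := Epoint (k + 1) hki (show k + 1 ≠ k by omega)
            omega
        · rcases eq_or_ne (k + 1) j with hkj' | hkj'
          · rw [subAt_ne _ hkj, hkj', subAt_self]
            have := hp.1.1 (show k ≤ j by omega)
            omega
          · rw [subAt_ne _ hkj, subAt_ne _ hkj']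
            exact hp.1.1 (Nat.le_succ k)
      · obtain ⟨K, hK⟩ := hp.1.2
        exact ⟨K, fun o ho => Nat.le_zero.1 ((hK o ho) ▸ subAt_le p.1 j o)⟩
    have hra : AddsBox (subAt p.1 j, p.2) p := ⟨j, Or.inl ⟨ga.symm, rfl⟩⟩
    have hrb : AddsBox (subAt p.1 j, p.2) p' := ⟨i, Or.inl ⟨gb.symm, h22.symm⟩⟩
    have hsz := addsBox_sz2 (p := (subAt p.1 j, p.2)) (q := p) hgpart hp.2.1 hra
    have hn := hp.2.2
    exact ⟨(subAt p.1 j, p.2), ⟨hgpart, hp.2.1, by simp only at hsz ⊢; omega⟩, hra, hrb⟩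
  · -- p → q on first coordinate, p' → q on second coordinate
    have G1 : p'.1 = addAt p.1 i := by rw [← F1]; exact E1
    have G2 : p.2 = addAt p'.2 j := by rw [← E2]; exact F2
    have hra : AddsBox (p.1, p'.2) p := ⟨j, Or.inr ⟨rfl, G2⟩⟩
    have hrb : AddsBox (p.1, p'.2) p' := ⟨i, Or.inl ⟨G1, rfl⟩⟩
    have hsz := addsBox_sz2 (p := (p.1, p'.2)) (q := p) hp.1 hp'.2.1 hra
    have hn := hp.2.2
    exact ⟨(p.1, p'.2), ⟨hp.1, hp'.2.1, by simp only at hsz ⊢; omega⟩, hra, hrb⟩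

lemma exists_common_lower {n : ℕ} {p p' q : PP} (hp : IsBp (n + 1) p) (hp' : IsBp (n + 1) p')
    (hne : p ≠ p') (h1 : AddsBox p q) (h2 : AddsBox p' q) :
    ∃ r, IsBp n r ∧ AddsBox r p ∧ AddsBox r p' := by
  obtain ⟨i, ⟨E1, E2⟩ | ⟨E1, E2⟩⟩ := h1
  · exact aux_lower hp hp' hne E1 E2 h2
  · obtain ⟨r, hr, h1', h2'⟩ := aux_lower (isBp_swap hp) (isBp_swap hp') (swap_ne hne)
      (i := i) E2 E1 (addsBox_swap h2)
    refine ⟨r.swap, isBp_swap hr, ?_, ?_⟩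
    · have := addsBox_swap h1'
      rwa [Prod.swap_swap] at this
    · have := addsBox_swap h2'
      rwa [Prod.swap_swap] at this

lemma aux_cover {n : ℕ} {r p p' : PP} (hr : IsBp n r) (hp : IsBp (n + 1) p)
    (hp' : IsBp (n + 1) p') (hne : p ≠ p') {i : ℕ} (E1 : p.1 = addAt r.1 i) (E2 : p.2 = r.2)
    (h2 : AddsBox r p') : ∃ q, IsBp (n + 2) q ∧ AddsBox p q ∧ AddsBox p' q := by
  obtain ⟨j, ⟨F1, F2⟩ | ⟨F1, F2⟩⟩ := h2
  · -- both p and p' are obtained by adding a box on the first coordinate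
    replace F1 : p'.1 = addAt r.1 j := F1
    have hij : i ≠ j := by
      rintro rfl
      exact hne (Prod.ext (by rw [E1, F1]) (by rw [E2, F2]))
    have key : addAt p.1 j = addAt p'.1 i := by
      rw [E1, F1, addAt_comm r.1 hij]
    have hadd' : Addable r.1 j := addable_of_isPartitionFun_addAt hr.1 (F1 ▸ hp'.1)
    have haddp : Addable p.1 j := by
      rcases hadd' with h0 | hlt
      · exact Or.inl h0
      · right
        rw [E1]
        have l1 := le_addAt r.1 i (j - 1)
        rw [addAt_ne _ (Ne.symm hij)]
        omega
    have hq1 : IsPartitionFun (addAt p.1 j) := isPartitionFun_addAt hp.1 haddp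
    have hqa : AddsBox p (addAt p.1 j, p.2) := ⟨j, Or.inl ⟨rfl, rfl⟩⟩
    have hqb : AddsBox p' (addAt p.1 j, p.2) :=
      ⟨i, Or.inl ⟨key, by rw [E2, F2]⟩⟩
    have hsz := addsBox_sz2 hp.1 hp.2.1 hqa
    have hn := hp.2.2
    exact ⟨(addAt p.1 j, p.2), ⟨hq1, hp.2.1, by simp only at hsz ⊢; omega⟩, hqa, hqb⟩
  · -- p adds on the first coordinate, p' adds on the second
    have hqa : AddsBox p (p.1, p'.2) := ⟨j, Or.inr ⟨rfl, by rw [F2, E2]⟩⟩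
    have hqb : AddsBox p' (p.1, p'.2) := ⟨i, Or.inl ⟨by rw [E1, F1]; rfl, rfl⟩⟩
    have hsz := addsBox_sz2 (p := p) (q := (p.1, p'.2)) hp.1 hp.2.1 hqa
    have hn := hp.2.2
    exact ⟨(p.1, p'.2), ⟨hp.1, hp'.2.1, by simp only at hsz ⊢; omega⟩, hqa, hqb⟩

lemma exists_common_cover {n : ℕ} {r p p' : PP} (hr : IsBp n r) (hp : IsBp (n + 1) p)
    (hp' : IsBp (n + 1) p') (hne : p ≠ p') (h1 : AddsBox r p) (h2 : AddsBox r p') :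
    ∃ q, IsBp (n + 2) q ∧ AddsBox p q ∧ AddsBox p' q := by
  obtain ⟨i, ⟨E1, E2⟩ | ⟨E1, E2⟩⟩ := h1
  · exact aux_cover hr hp hp' hne E1 E2 h2
  · obtain ⟨q, hq, h1', h2'⟩ := aux_cover (isBp_swap hr) (isBp_swap hp) (isBp_swap hp')
      (swap_ne hne) (i := i) E2 E1 (addsBox_swap h2)
    refine ⟨q.swap, isBp_swap hq, ?_, ?_⟩
    · have := addsBox_swap h1'
      rwa [Prod.swap_swap] at this
    · have := addsBox_swap h2'
      rwa [Prod.swap_swap] at this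


/-! ### Finiteness and counting infrastructure -/

lemma sz_ge_value {f : ℕ → ℕ} {K : ℕ} (hK : ∀ i ≥ K, f i = 0) (i : ℕ) : f i ≤ sz f := by
  rcases lt_or_ge i K with hi | hi
  · rw [sz_eq_sum hK]
    exact Finset.single_le_sum (fun j _ => Nat.zero_le (f j)) (Finset.mem_range.2 hi)
  · rw [hK i hi]
    exact Nat.zero_le _

lemma isBp_zero_ge {n : ℕ} {p : PP} (hp : IsBp n p) :
    ∀ i ≥ n, p.1 i = 0 ∧ p.2 i = 0 := by
  intro i hi
  have h1 : sz p.1 ≤ n := by have := hp.2.2; omega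
  have h2 : sz p.2 ≤ n := by have := hp.2.2; omega
  exact ⟨partition_vanish hp.1 h1 i hi, partition_vanish hp.2.1 h2 i hi⟩

lemma isBp_val_le {n : ℕ} {p : PP} (hp : IsBp n p) (i : ℕ) : p.1 i ≤ n ∧ p.2 i ≤ n := by
  obtain ⟨K1, hK1⟩ := hp.1.2
  obtain ⟨K2, hK2⟩ := hp.2.1.2
  have := sz_ge_value hK1 i
  have := sz_ge_value hK2 i
  have := hp.2.2
  omega

lemma fun_eq_of_agree {f g : ℕ → ℕ} (n : ℕ) (h0f : ∀ i ≥ n, f i = 0) (h0g : ∀ i ≥ n, g i = 0)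
    (h : ∀ i < n, f i = g i) : f = g := by
  funext i
  rcases lt_or_ge i n with hi | hi
  · exact h i hi
  · rw [h0f i hi, h0g i hi]

/-- encoding of a bipartition of `n` by finitely many bounded values -/
def encode (n : ℕ) (p : PP) : Fin n → Fin (n + 1) × Fin (n + 1) :=
  fun i => (⟨min (p.1 i) n, by omega⟩, ⟨min (p.2 i) n, by omega⟩)

lemma encode_inj {n : ℕ} {p p' : PP} (hp : IsBp n p) (hp' : IsBp n p')
    (h : encode n p = encode n p') : p = p' := by
  have key : ∀ i < n, p.1 i = p'.1 i ∧ p.2 i = p'.2 i := by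
    intro i hi
    have := congrFun h ⟨i, hi⟩
    simp only [encode, Prod.mk.injEq, Fin.mk.injEq] at this
    have b1 := (isBp_val_le hp i).1
    have b2 := (isBp_val_le hp i).2
    have b3 := (isBp_val_le hp' i).1
    have b4 := (isBp_val_le hp' i).2
    omega
  refine Prod.ext ?_ ?_
  · exact fun_eq_of_agree n (fun i hi => (isBp_zero_ge hp i hi).1)
      (fun i hi => (isBp_zero_ge hp' i hi).1) (fun i hi => (key i hi).1)
  · exact fun_eq_of_agree n (fun i hi => (isBp_zero_ge hp i hi).2)
      (fun i hi => (isBp_zero_ge hp' i hi).2) (fun i hi => (key i hi).2)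

lemma isBp_of_mem_bip {n : ℕ} (p : BipartitionOf n) : IsBp n p.1 := p.2

instance finite_subtype_isBp (n : ℕ) (P : PP → Prop) : Finite {p : PP // IsBp n p ∧ P p} := by
  apply Finite.of_injective (fun p => encode n p.1)
  intro p p' h
  exact Subtype.ext (encode_inj p.2.1 p'.2.1 h)

instance finite_bip (n : ℕ) : Finite (BipartitionOf n) := by
  apply Finite.of_injective (fun p => encode n p.1)
  intro p p' h
  exact Subtype.ext (encode_inj (isBp_of_mem_bip p) (isBp_of_mem_bip p') h)

/-- every stage of a chain is a bipartition of the stage index -/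
lemma chain_isBp {n : ℕ} {p : PP} (c : SYBchain n p) :
    ∀ i : Fin (n + 1), IsBp i.val (c.1 i) := by
  intro i
  induction i using Fin.induction with
  | zero =>
      rw [c.2.1]
      refine ⟨⟨fun _ _ _ => le_refl 0, 0, fun _ _ => rfl⟩,
        ⟨fun _ _ _ => le_refl 0, 0, fun _ _ => rfl⟩, ?_⟩
      have h0 : sz (fun _ => (0 : ℕ)) = 0 := by
        rw [sz_eq_sum (K := 0) (fun _ _ => rfl)]
        simp
      simp [h0]
  | succ i ih =>
      have hstep := c.2.2.2.2 i
      have hparts := c.2.2.2.1 i.succ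
      have hsz := addsBox_sz2 ih.1 ih.2.1 hstep
      refine ⟨hparts.1, hparts.2, ?_⟩
      rw [hsz, ih.2.2]
      simp [Fin.val_succ]

lemma chain_end_isBp {n : ℕ} {p : PP} (c : SYBchain n p) : IsBp n p := by
  have := chain_isBp c (Fin.last n)
  rwa [c.2.2.1] at this

instance finite_chain (n : ℕ) (p : PP) : Finite (SYBchain n p) := by
  apply Finite.of_injective
    (fun c => (fun i (j : Fin n) => (encode n ((c.1 i)) j) : Fin (n+1) → Fin n → Fin (n+1) × Fin (n+1)))
  intro c c' h
  apply Subtype.ext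
  funext i
  have hbi := chain_isBp c i
  have hbi' := chain_isBp c' i
  have hin : i.val ≤ n := by omega
  have henc : encode n (c.1 i) = encode n (c'.1 i) := by
    funext j
    exact congrFun (congrFun h i) j
  have key : ∀ j < n, (c.1 i).1 j = (c'.1 i).1 j ∧ (c.1 i).2 j = (c'.1 i).2 j := by
    intro j hj
    have := congrFun henc ⟨j, hj⟩
    simp only [encode, Prod.mk.injEq, Fin.mk.injEq] at this
    have b1 := (isBp_val_le hbi j).1
    have b2 := (isBp_val_le hbi j).2
    have b3 := (isBp_val_le hbi' j).1
    have b4 := (isBp_val_le hbi' j).2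
    omega
  have z1 : ∀ j ≥ n, (c.1 i).1 j = 0 ∧ (c.1 i).2 j = 0 :=
    fun j hj => isBp_zero_ge hbi j (le_trans hin hj)
  have z1' : ∀ j ≥ n, (c'.1 i).1 j = 0 ∧ (c'.1 i).2 j = 0 :=
    fun j hj => isBp_zero_ge hbi' j (le_trans hin hj)
  refine Prod.ext ?_ ?_
  · exact fun_eq_of_agree n (fun j hj => (z1 j hj).1) (fun j hj => (z1' j hj).1)
      (fun j hj => (key j hj).1)
  · exact fun_eq_of_agree n (fun j hj => (z1 j hj).2) (fun j hj => (z1' j hj).2)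
      (fun j hj => (key j hj).2)

noncomputable instance (priority := low) fintypeOfFinite (α : Type*) [Finite α] : Fintype α :=
  Fintype.ofFinite α

lemma my_card_sigma {ι : Type*} [Fintype ι] (F : ι → Type*) [∀ i, Finite (F i)] :
    Nat.card (Σ i, F i) = ∑ i, Nat.card (F i) := by
  letI : ∀ i, Fintype (F i) := fun i => Fintype.ofFinite _
  rw [Nat.card_eq_fintype_card, Fintype.card_sigma]
  congr 1
  funext i
  rw [Nat.card_eq_fintype_card]


/-! ### Covers and the local differential structure -/

noncomputable def eN (n : ℕ) (p : PP) : ℕ := Nat.card (SYBchain n p)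

def zp : PP := (fun _ => 0, fun _ => 0)

abbrev Cov (n : ℕ) (q : PP) : Type := {p : PP // IsBp n p ∧ AddsBox p q}
abbrev CovUp (n : ℕ) (p : PP) : Type := {q : PP // IsBp (n + 1) q ∧ AddsBox p q}
abbrev CC (n : ℕ) (p p' : PP) : Type := {q : PP // IsBp (n + 2) q ∧ AddsBox p q ∧ AddsBox p' q}
abbrev CL (n : ℕ) (p p' : PP) : Type := {r : PP // IsBp n r ∧ AddsBox r p ∧ AddsBox r p'}

abbrev AddSet (f : ℕ → ℕ) : Type := {i : ℕ // Addable f i}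
abbrev RemSet (f : ℕ → ℕ) : Type := {j : ℕ // Removable f j}

lemma finite_remSet {f : ℕ → ℕ} (hf : IsPartitionFun f) : Finite (RemSet f) := by
  obtain ⟨K, hK⟩ := hf.2
  apply Finite.of_injective (fun j : RemSet f => (⟨j.1, by
      have hj := j.2
      unfold Removable at hj
      by_contra hc
      have h0 := hK j.1 (le_of_not_gt hc)
      omega⟩ : Fin K))
  intro a b h
  exact Subtype.ext (congrArg Fin.val h)

def remToAdd {f : ℕ → ℕ} : Option (RemSet f) → AddSet f
  | none => ⟨0, Or.inl rfl⟩
  | some j => ⟨j.1 + 1, Or.inr (by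
      have hj := j.2
      unfold Removable at hj
      simpa using hj)⟩

lemma remToAdd_bij {f : ℕ → ℕ} : Function.Bijective (remToAdd (f := f)) := by
  constructor
  · intro a b h
    have hv := congrArg Subtype.val h
    match a, b with
    | none, none => rfl
    | none, some b => simp [remToAdd] at hv
    | some a, none => simp [remToAdd] at hv
    | some a, some b =>
        simp only [remToAdd, Nat.add_right_cancel_iff] at hv
        exact congrArg some (Subtype.ext hv)
  · rintro ⟨i, hi⟩
    match i, hi with
    | 0, _ => exact ⟨none, rfl⟩
    | (k+1), hi =>
        rcases hi with h0 | hlt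
        · exact absurd h0 (by omega)
        · refine ⟨some ⟨k, ?_⟩, rfl⟩
          have : (k + 1) - 1 = k := rfl
          rwa [this] at hlt

lemma finite_addSet {f : ℕ → ℕ} (hf : IsPartitionFun f) : Finite (AddSet f) := by
  haveI := finite_remSet hf
  exact Finite.of_surjective _ remToAdd_bij.2

lemma card_addSet {f : ℕ → ℕ} (hf : IsPartitionFun f) :
    Nat.card (AddSet f) = Nat.card (RemSet f) + 1 := by
  haveI := finite_remSet hf
  calc Nat.card (AddSet f) = Nat.card (Option (RemSet f)) :=
        (Nat.card_congr (Equiv.ofBijective _ remToAdd_bij)).symm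
    _ = Nat.card (RemSet f) + 1 := Finite.card_option

lemma sz_addAt {f : ℕ → ℕ} (hf : IsPartitionFun f) (i : ℕ) : sz (addAt f i) = sz f + 1 := by
  obtain ⟨K, hK⟩ := hf.2
  exact sz_update_add hK i

lemma sz_subAt {f : ℕ → ℕ} (hf : IsPartitionFun f) {j : ℕ} (h1 : 1 ≤ f j) :
    sz (subAt f j) + 1 = sz f := by
  obtain ⟨K, hK⟩ := hf.2
  have hK' : ∀ i ≥ K, subAt f j i = 0 :=
    fun i hi => Nat.le_zero.1 ((hK i hi) ▸ subAt_le f j i)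
  have h2 : sz (addAt (subAt f j) j) = sz (subAt f j) + 1 := sz_update_add hK' j
  rw [← h2, addAt_subAt h1]

lemma subAt_injective {f : ℕ → ℕ} {i j : ℕ} (h1 : 1 ≤ f i) (h : subAt f i = subAt f j) :
    i = j := by
  by_contra hne
  have := congrFun h i
  rw [subAt_self, subAt_ne _ hne] at this
  omega

lemma subAt_ne_self {f : ℕ → ℕ} {j : ℕ} (h1 : 1 ≤ f j) : subAt f j ≠ f := by
  intro h
  have := congrFun h j
  rw [subAt_self] at this
  omega

lemma covUp_card {n : ℕ} {p : PP} (hp : IsBp n p) :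
    Nat.card (CovUp n p) = Nat.card (AddSet p.1) + Nat.card (AddSet p.2) := by
  haveI := finite_addSet hp.1
  haveI := finite_addSet hp.2.1
  rw [← Nat.card_sum]
  refine Nat.card_congr (Equiv.ofBijective (fun x : AddSet p.1 ⊕ AddSet p.2 => match x with
    | Sum.inl i => ⟨(addAt p.1 i.1, p.2), ⟨⟨isPartitionFun_addAt hp.1 i.2, hp.2.1, by
        show sz (addAt p.1 i.1) + sz p.2 = n + 1
        rw [sz_addAt hp.1]
        have := hp.2.2
        omega⟩, ⟨i.1, Or.inl ⟨rfl, rfl⟩⟩⟩⟩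
    | Sum.inr i => ⟨(p.1, addAt p.2 i.1), ⟨⟨hp.1, isPartitionFun_addAt hp.2.1 i.2, by
        show sz p.1 + sz (addAt p.2 i.1) = n + 1
        rw [sz_addAt hp.2.1]
        have := hp.2.2
        omega⟩, ⟨i.1, Or.inr ⟨rfl, rfl⟩⟩⟩⟩) ⟨?_, ?_⟩).symm
  · rintro (a | a) (b | b) h <;> have hv := congrArg Subtype.val h
    · have := addAt_injective p.1 (congrArg Prod.fst hv)
      exact congrArg Sum.inl (Subtype.ext this)
    · exact absurd (congrArg Prod.fst hv) (addAt_ne_self p.1 a.1)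
    · exact absurd (congrArg Prod.fst hv).symm (addAt_ne_self p.1 b.1)
    · have := addAt_injective p.2 (congrArg Prod.snd hv)
      exact congrArg Sum.inr (Subtype.ext this)
  · rintro ⟨q, hq, ⟨i, ⟨E1, E2⟩ | ⟨E1, E2⟩⟩⟩
    · replace E1 : q.1 = addAt p.1 i := E1
      have hi : Addable p.1 i := addable_of_isPartitionFun_addAt hp.1 (E1 ▸ hq.1)
      refine ⟨Sum.inl ⟨i, hi⟩, Subtype.ext ?_⟩
      show (addAt p.1 i, p.2) = q
      exact (Prod.ext (x := q) (y := (addAt p.1 i, p.2)) E1 E2).symm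
    · replace E2 : q.2 = addAt p.2 i := E2
      have hi : Addable p.2 i := addable_of_isPartitionFun_addAt hp.2.1 (E2 ▸ hq.2.1)
      refine ⟨Sum.inr ⟨i, hi⟩, Subtype.ext ?_⟩
      show (p.1, addAt p.2 i) = q
      exact (Prod.ext (x := q) (y := (p.1, addAt p.2 i)) E1 E2).symm

lemma covDown_card {n : ℕ} {p : PP} (hp : IsBp (n + 1) p) :
    Nat.card (Cov n p) = Nat.card (RemSet p.1) + Nat.card (RemSet p.2) := by
  haveI := finite_remSet hp.1
  haveI := finite_remSet hp.2.1
  rw [← Nat.card_sum]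
  refine Nat.card_congr (Equiv.ofBijective (fun x : RemSet p.1 ⊕ RemSet p.2 => match x with
    | Sum.inl j => ⟨(subAt p.1 j.1, p.2), ⟨⟨isPartitionFun_subAt hp.1 j.2, hp.2.1, by
        show sz (subAt p.1 j.1) + sz p.2 = n
        have h1 : 1 ≤ p.1 j.1 := by have := j.2; unfold Removable at this; omega
        have := sz_subAt hp.1 h1
        have := hp.2.2
        omega⟩, ⟨j.1, Or.inl ⟨(addAt_subAt (by
          have := j.2; unfold Removable at this; omega : 1 ≤ p.1 j.1)).symm, rfl⟩⟩⟩⟩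
    | Sum.inr j => ⟨(p.1, subAt p.2 j.1), ⟨⟨hp.1, isPartitionFun_subAt hp.2.1 j.2, by
        show sz p.1 + sz (subAt p.2 j.1) = n
        have h1 : 1 ≤ p.2 j.1 := by have := j.2; unfold Removable at this; omega
        have := sz_subAt hp.2.1 h1
        have := hp.2.2
        omega⟩, ⟨j.1, Or.inr ⟨rfl, (addAt_subAt (by
          have := j.2; unfold Removable at this; omega : 1 ≤ p.2 j.1)).symm⟩⟩⟩⟩) ⟨?_, ?_⟩).symm
  · rintro (a | a) (b | b) h <;> have hv := congrArg Subtype.val h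
    · have h1 : 1 ≤ p.1 a.1 := by have := a.2; unfold Removable at this; omega
      exact congrArg Sum.inl (Subtype.ext (subAt_injective h1 (congrArg Prod.fst hv)))
    · have h1 : 1 ≤ p.1 a.1 := by have := a.2; unfold Removable at this; omega
      exact absurd (congrArg Prod.fst hv) (subAt_ne_self h1)
    · have h1 : 1 ≤ p.1 b.1 := by have := b.2; unfold Removable at this; omega
      exact absurd (congrArg Prod.fst hv).symm (subAt_ne_self h1)
    · have h1 : 1 ≤ p.2 a.1 := by have := a.2; unfold Removable at this; omega
      exact congrArg Sum.inr (Subtype.ext (subAt_injective h1 (congrArg Prod.snd hv)))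
  · rintro ⟨r, hr, ⟨i, ⟨E1, E2⟩ | ⟨E1, E2⟩⟩⟩
    · replace E1 : p.1 = addAt r.1 i := E1
      have hv : p.1 i = r.1 i + 1 := by rw [E1, addAt_self]
      have hr1 : r.1 = subAt p.1 i := by rw [E1, subAt_addAt]
      have hrem : Removable p.1 i :=
        removable_of_isPartitionFun_subAt hp.1 (hr1 ▸ hr.1) (by omega)
      refine ⟨Sum.inl ⟨i, hrem⟩, Subtype.ext ?_⟩
      show (subAt p.1 i, p.2) = r
      exact (Prod.ext (x := r) (y := (subAt p.1 i, p.2)) hr1 E2.symm).symm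
    · replace E2 : p.2 = addAt r.2 i := E2
      have hv : p.2 i = r.2 i + 1 := by rw [E2, addAt_self]
      have hr2 : r.2 = subAt p.2 i := by rw [E2, subAt_addAt]
      have hrem : Removable p.2 i :=
        removable_of_isPartitionFun_subAt hp.2.1 (hr2 ▸ hr.2.1) (by omega)
      refine ⟨Sum.inr ⟨i, hrem⟩, Subtype.ext ?_⟩
      show (p.1, subAt p.2 i) = r
      exact (Prod.ext (x := r) (y := (p.1, subAt p.2 i)) E1.symm hr2).symm

lemma cc_card_of_ne {n : ℕ} {p p' : PP} (hp : IsBp (n + 1) p) (hp' : IsBp (n + 1) p')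
    (hne : p ≠ p') : Nat.card (CC n p p') = Nat.card (CL n p p') := by
  haveI hCC : Subsingleton (CC n p p') := ⟨by
    rintro ⟨q, hq, h1, h2⟩ ⟨q', hq', h1', h2'⟩
    apply Subtype.ext
    show q = q'
    rw [common_cover_eq_sup hp hp' hne hq h1 h2, common_cover_eq_sup hp hp' hne hq' h1' h2']⟩
  haveI hCL : Subsingleton (CL n p p') := ⟨by
    rintro ⟨r, hr, h1, h2⟩ ⟨r', hr', h1', h2'⟩
    apply Subtype.ext
    show r = r'
    rw [common_lower_eq_inf hp hp' hne hr h1 h2, common_lower_eq_inf hp hp' hne hr' h1' h2']⟩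
  have hiff : Nonempty (CC n p p') ↔ Nonempty (CL n p p') := by
    constructor
    · rintro ⟨q, hq, h1, h2⟩
      obtain ⟨r, hr, g1, g2⟩ := exists_common_lower hp hp' hne h1 h2
      exact ⟨⟨r, hr, g1, g2⟩⟩
    · rintro ⟨r, hr, g1, g2⟩
      obtain ⟨q, hq, g1', g2'⟩ := exists_common_cover hr hp hp' hne g1 g2
      exact ⟨⟨q, hq, g1', g2'⟩⟩
  rcases isEmpty_or_nonempty (CC n p p') with hE | hN
  · haveI : IsEmpty (CL n p p') :=
      not_nonempty_iff.1 (fun h => (not_nonempty_iff.2 hE) (hiff.2 h))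
    rw [Nat.card_of_isEmpty, Nat.card_of_isEmpty]
  · haveI : Nonempty (CL n p p') := hiff.1 hN
    rw [Nat.card_unique, Nat.card_unique]

lemma cc_card_self {n : ℕ} {p : PP} (hp : IsBp (n + 1) p) :
    Nat.card (CC n p p) = Nat.card (CL n p p) + 2 := by
  have e1 : Nat.card (CC n p p) = Nat.card (CovUp (n + 1) p) :=
    Nat.card_congr (Equiv.subtypeEquivRight (fun q =>
      and_congr_right (fun _ => and_self_iff)))
  have e2 : Nat.card (CL n p p) = Nat.card (Cov n p) :=
    Nat.card_congr (Equiv.subtypeEquivRight (fun r =>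
      and_congr_right (fun _ => and_self_iff)))
  rw [e1, e2, covUp_card hp, covDown_card hp, card_addSet hp.1, card_addSet hp.2.1]
  omega


/-! ### Chains: truncation and extension -/

lemma isPartitionFun_zero : IsPartitionFun (fun _ => 0) :=
  ⟨fun _ _ _ => le_refl 0, 0, fun _ _ => rfl⟩

lemma sz_zero : sz (fun _ => (0 : ℕ)) = 0 := by
  rw [sz_eq_sum (K := 0) (fun _ _ => rfl)]
  simp

lemma isBp_zp : IsBp 0 zp := by
  refine ⟨isPartitionFun_zero, isPartitionFun_zero, ?_⟩
  show sz (fun _ => (0:ℕ)) + sz (fun _ => (0:ℕ)) = 0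
  rw [sz_zero]

lemma isBp_zero_unique {p : PP} (hp : IsBp 0 p) : p = zp := by
  have h := isBp_zero_ge hp
  refine Prod.ext ?_ ?_
  · funext i
    exact (h i (Nat.zero_le i)).1
  · funext i
    exact (h i (Nat.zero_le i)).2

instance subsingleton_chain_zero (p : PP) : Subsingleton (SYBchain 0 p) := by
  constructor
  rintro ⟨c, h0, _, _, _⟩ ⟨c', h0', _, _, _⟩
  apply Subtype.ext
  funext i
  have hv : i.val = 0 := Nat.lt_one_iff.1 i.isLt
  have hi : i = 0 := Fin.ext hv
  subst hi
  show c 0 = c' 0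
  rw [h0, h0']

lemma eN_zp : eN 0 zp = 1 := by
  haveI : Nonempty (SYBchain 0 zp) :=
    ⟨⟨fun _ => zp, rfl, rfl, fun _ => ⟨isPartitionFun_zero, isPartitionFun_zero⟩,
      fun i => i.elim0⟩⟩
  exact Nat.card_unique

def extendChain {n : ℕ} {q : PP} (hq : IsBp (n + 1) q)
    (x : Σ p : Cov n q, SYBchain n p.1) : SYBchain (n + 1) q :=
  ⟨Fin.snoc x.2.1 q, by
    have h0 : (0 : Fin (n + 2)) = Fin.castSucc 0 := rfl
    refine ⟨?_, ?_, ?_, ?_⟩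
    · rw [h0, Fin.snoc_castSucc]
      exact x.2.2.1
    · exact Fin.snoc_last _ _
    · intro i
      induction i using Fin.lastCases with
      | last =>
          rw [Fin.snoc_last]
          exact ⟨hq.1, hq.2.1⟩
      | cast j =>
          rw [Fin.snoc_castSucc]
          exact x.2.2.2.2.1 j
    · intro i
      induction i using Fin.lastCases with
      | last =>
          rw [Fin.succ_last, Fin.snoc_last, Fin.snoc_castSucc]
          rw [x.2.2.2.1]
          exact x.1.2.2
      | cast j =>
          rw [Fin.succ_castSucc, Fin.snoc_castSucc, Fin.snoc_castSucc]
          exact x.2.2.2.2.2 j⟩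

lemma extendChain_bijective {n : ℕ} {q : PP} (hq : IsBp (n + 1) q) :
    Function.Bijective (extendChain hq) := by
  constructor
  · rintro ⟨⟨p, hp⟩, ⟨c, hc⟩⟩ ⟨⟨p', hp'⟩, ⟨c', hc'⟩⟩ h
    have hcc : (Fin.snoc c q : Fin (n + 2) → PP) = Fin.snoc c' q := congrArg Subtype.val h
    have h1 : c = c' := by
      have := congrArg Fin.init hcc
      rwa [Fin.init_snoc, Fin.init_snoc] at this
    subst h1
    have e1 : c (Fin.last n) = p := hc.2.1
    have e2 : c (Fin.last n) = p' := hc'.2.1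
    have h2 : p = p' := by rw [← e1, ← e2]
    subst h2
    rfl
  · rintro ⟨c, h0, hlast, hparts, hsteps⟩
    have hbp := chain_isBp ⟨c, h0, hlast, hparts, hsteps⟩ (Fin.castSucc (Fin.last n))
    simp only [Fin.coe_castSucc, Fin.val_last] at hbp
    have hpq : AddsBox (c (Fin.castSucc (Fin.last n))) q := by
      have := hsteps (Fin.last n)
      rwa [Fin.succ_last, hlast] at this
    refine ⟨⟨⟨c (Fin.castSucc (Fin.last n)), hbp, hpq⟩, ⟨Fin.init c, ?_, rfl, ?_, ?_⟩⟩, ?_⟩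
    · show c (Fin.castSucc 0) = (fun _ => (0:ℕ), fun _ => (0:ℕ))
      exact h0
    · intro i
      exact hparts i.castSucc
    · intro j
      have := hsteps j.castSucc
      rw [Fin.succ_castSucc] at this
      exact this
    · apply Subtype.ext
      show (Fin.snoc (Fin.init c) q : Fin (n + 2) → PP) = c
      rw [← hlast]
      exact Fin.snoc_init_self c

lemma eN_succ {n : ℕ} {q : PP} (hq : IsBp (n + 1) q) :
    eN (n + 1) q = ∑ p : Cov n q, eN n p.1 := by
  show Nat.card (SYBchain (n + 1) q) = _
  rw [← Nat.card_congr (Equiv.ofBijective _ (extendChain_bijective hq))]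
  rw [my_card_sigma]
  rfl


/-! ### The main counting argument -/

def shuffleCC {n : ℕ} {p : PP} :
    (Σ q : CovUp (n + 1) p, Σ p' : Cov (n + 1) q.1, SYBchain (n + 1) p'.1) ≃
      (Σ p' : BipartitionOf (n + 1), CC n p p'.1 × SYBchain (n + 1) p'.1) where
  toFun x := ⟨⟨x.2.1.1, x.2.1.2.1⟩, ⟨⟨x.1.1, x.1.2.1, x.1.2.2, x.2.1.2.2⟩, x.2.2⟩⟩
  invFun y := ⟨⟨y.2.1.1, y.2.1.2.1, y.2.1.2.2.1⟩, ⟨⟨y.1.1, y.1.2, y.2.1.2.2.2⟩, y.2.2⟩⟩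
  left_inv := by rintro ⟨⟨q, hq1, hq2⟩, ⟨⟨p', hp'1, hp'2⟩, c⟩⟩; rfl
  right_inv := by rintro ⟨⟨p', hp'⟩, ⟨⟨q, hq1, hq2, hq3⟩, c⟩⟩; rfl

def shuffleCL {n : ℕ} {p : PP} :
    (Σ p' : BipartitionOf (n + 1), CL n p p'.1 × SYBchain (n + 1) p'.1) ≃
      (Σ r : Cov n p, Σ p' : CovUp n r.1, SYBchain (n + 1) p'.1) where
  toFun y := ⟨⟨y.2.1.1, y.2.1.2.1, y.2.1.2.2.1⟩, ⟨⟨y.1.1, y.1.2, y.2.1.2.2.2⟩, y.2.2⟩⟩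
  invFun x := ⟨⟨x.2.1.1, x.2.1.2.1⟩, ⟨⟨x.1.1, x.1.2.1, x.1.2.2, x.2.1.2.2⟩, x.2.2⟩⟩
  left_inv := by rintro ⟨⟨p', hp'⟩, ⟨⟨r, hr1, hr2, hr3⟩, c⟩⟩; rfl
  right_inv := by rintro ⟨⟨r, hr1, hr2⟩, ⟨⟨p', hp'1, hp'2⟩, c⟩⟩; rfl

def shuffleT {n : ℕ} :
    (Σ q : BipartitionOf (n + 1), Σ p : Cov n q.1, SYBchain n p.1 × SYBchain (n + 1) q.1) ≃
      (Σ p : BipartitionOf n, Σ q : CovUp n p.1, SYBchain n p.1 × SYBchain (n + 1) q.1) where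
  toFun x := ⟨⟨x.2.1.1, x.2.1.2.1⟩, ⟨⟨x.1.1, x.1.2, x.2.1.2.2⟩, x.2.2⟩⟩
  invFun y := ⟨⟨y.2.1.1, y.2.1.2.1⟩, ⟨⟨y.1.1, y.1.2, y.2.1.2.2⟩, y.2.2⟩⟩
  left_inv := by rintro ⟨⟨q, hq⟩, ⟨⟨p, hp1, hp2⟩, c, c'⟩⟩; rfl
  right_inv := by rintro ⟨⟨p, hp⟩, ⟨⟨q, hq1, hq2⟩, c, c'⟩⟩; rfl

lemma upSum : ∀ n : ℕ, ∀ {p : PP}, IsBp n p →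
    ∑ q : CovUp n p, eN (n + 1) q.1 = 2 * (n + 1) * eN n p := by
  intro n
  induction n with
  | zero =>
      intro p hp
      have hzp := isBp_zero_unique hp
      subst hzp
      have hone : ∀ q : CovUp 0 zp, eN 1 q.1 = 1 := by
        intro q
        rw [eN_succ q.2.1]
        haveI : Subsingleton (Cov 0 q.1) := ⟨fun a b => Subtype.ext (by
          rw [isBp_zero_unique a.2.1, isBp_zero_unique b.2.1])⟩
        rw [Fintype.sum_subsingleton (fun p' : Cov 0 q.1 => eN 0 p'.1) ⟨zp, isBp_zp, q.2.2⟩]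
        exact eN_zp
      have hcard : Nat.card (CovUp 0 zp) = 2 := by
        haveI h1 : IsEmpty (RemSet zp.1) := ⟨fun j => by
          have hj : (0 : ℕ) < 0 := j.2
          omega⟩
        haveI h2 : IsEmpty (RemSet zp.2) := ⟨fun j => by
          have hj : (0 : ℕ) < 0 := j.2
          omega⟩
        rw [covUp_card isBp_zp, card_addSet isBp_zp.1, card_addSet isBp_zp.2.1,
          Nat.card_of_isEmpty, Nat.card_of_isEmpty]
      calc ∑ q : CovUp 0 zp, eN 1 q.1 = ∑ _q : CovUp 0 zp, 1 :=
            Finset.sum_congr rfl (fun q _ => hone q)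
        _ = Fintype.card (CovUp 0 zp) := by rw [Fintype.card, Finset.sum_const, smul_eq_mul, mul_one]
        _ = 2 := by rw [← Nat.card_eq_fintype_card, hcard]
        _ = 2 * (0 + 1) * eN 0 zp := by rw [eN_zp]
  | succ n ih =>
      intro p hp
      classical
      -- Step 1: expand each eN (n+2) q by one chain step
      have step1 : ∑ q : CovUp (n + 1) p, eN (n + 2) q.1 =
          ∑ q : CovUp (n + 1) p, ∑ p' : Cov (n + 1) q.1, eN (n + 1) p'.1 :=
        Finset.sum_congr rfl (fun q _ => eN_succ q.2.1)
      -- Step 2: reorganize as a sum over bipartitions p' with common-cover multiplicity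
      have step2 : ∑ q : CovUp (n + 1) p, ∑ p' : Cov (n + 1) q.1, eN (n + 1) p'.1 =
          ∑ p' : BipartitionOf (n + 1), Nat.card (CC n p p'.1) * eN (n + 1) p'.1 := by
        have e1 : ∑ q : CovUp (n + 1) p, ∑ p' : Cov (n + 1) q.1, eN (n + 1) p'.1 =
            Nat.card (Σ q : CovUp (n + 1) p, Σ p' : Cov (n + 1) q.1, SYBchain (n + 1) p'.1) := by
          rw [my_card_sigma]
          exact Finset.sum_congr rfl (fun q _ => (my_card_sigma _).symm)
        have e2 : Nat.card (Σ p' : BipartitionOf (n + 1), CC n p p'.1 × SYBchain (n + 1) p'.1) =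
            ∑ p' : BipartitionOf (n + 1), Nat.card (CC n p p'.1) * eN (n + 1) p'.1 := by
          rw [my_card_sigma]
          exact Finset.sum_congr rfl (fun p' _ => Nat.card_prod _ _)
        rw [e1, Nat.card_congr (shuffleCC (n := n) (p := p)), e2]
      -- Step 3: split off the diagonal term and replace common covers by common lower covers
      set pb : BipartitionOf (n + 1) := ⟨p, hp⟩ with hpb
      have step3 : ∑ p' : BipartitionOf (n + 1), Nat.card (CC n p p'.1) * eN (n + 1) p'.1 =
          (∑ p' : BipartitionOf (n + 1), Nat.card (CL n p p'.1) * eN (n + 1) p'.1)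
            + 2 * eN (n + 1) p := by
        rw [← Finset.add_sum_erase _ _ (Finset.mem_univ pb),
          ← Finset.add_sum_erase _ (fun p' : BipartitionOf (n+1) =>
            Nat.card (CL n p p'.1) * eN (n + 1) p'.1) (Finset.mem_univ pb)]
        have hdiag : Nat.card (CC n p pb.1) * eN (n + 1) pb.1 =
            Nat.card (CL n p pb.1) * eN (n + 1) pb.1 + 2 * eN (n + 1) p := by
          rw [cc_card_self hp]
          show (Nat.card (CL n p p) + 2) * eN (n + 1) p = _
          ring
        have hoff : ∑ p' ∈ Finset.univ.erase pb, Nat.card (CC n p p'.1) * eN (n + 1) p'.1 =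
            ∑ p' ∈ Finset.univ.erase pb, Nat.card (CL n p p'.1) * eN (n + 1) p'.1 := by
          refine Finset.sum_congr rfl (fun p' hp' => ?_)
          have hne : p ≠ p'.1 := by
            intro hE
            exact (Finset.mem_erase.1 hp').1 (Subtype.ext hE.symm)
          rw [cc_card_of_ne hp (isBp_of_mem_bip p') hne]
        rw [hdiag, hoff]
        ring
      -- Step 4: reorganize the lower-cover sum through the down-up shuffle
      have step4 : ∑ p' : BipartitionOf (n + 1), Nat.card (CL n p p'.1) * eN (n + 1) p'.1 =
          ∑ r : Cov n p, ∑ p' : CovUp n r.1, eN (n + 1) p'.1 := by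
        have e1 : ∑ p' : BipartitionOf (n + 1), Nat.card (CL n p p'.1) * eN (n + 1) p'.1 =
            Nat.card (Σ p' : BipartitionOf (n + 1), CL n p p'.1 × SYBchain (n + 1) p'.1) := by
          rw [my_card_sigma]
          exact Finset.sum_congr rfl (fun p' _ => (Nat.card_prod _ _).symm)
        have e2 : Nat.card (Σ r : Cov n p, Σ p' : CovUp n r.1, SYBchain (n + 1) p'.1) =
            ∑ r : Cov n p, ∑ p' : CovUp n r.1, eN (n + 1) p'.1 := by
          rw [my_card_sigma]
          exact Finset.sum_congr rfl (fun r _ => my_card_sigma _)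
        rw [e1, Nat.card_congr (shuffleCL (n := n) (p := p)), e2]
      -- Step 5: apply the induction hypothesis and resum
      have step5 : ∑ r : Cov n p, ∑ p' : CovUp n r.1, eN (n + 1) p'.1 =
          2 * (n + 1) * eN (n + 1) p := by
        have e1 : ∀ r : Cov n p, ∑ p' : CovUp n r.1, eN (n + 1) p'.1 = 2 * (n + 1) * eN n r.1 :=
          fun r => ih r.2.1
        rw [Finset.sum_congr rfl (fun r _ => e1 r), ← Finset.mul_sum, ← eN_succ hp]
      rw [step1, step2, step3, step4, step5]
      ring

lemma T_eq (n : ℕ) :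
    Nat.card (Σ p : BipartitionOf n, SYBchain n p.1 × SYBchain n p.1) =
      ∑ p : BipartitionOf n, eN n p.1 * eN n p.1 := by
  rw [my_card_sigma]
  exact Finset.sum_congr rfl (fun p _ => Nat.card_prod _ _)

lemma T_zero :
    Nat.card (Σ p : BipartitionOf 0, SYBchain 0 p.1 × SYBchain 0 p.1) = 1 := by
  rw [T_eq]
  haveI : Subsingleton (BipartitionOf 0) := ⟨fun a b => Subtype.ext (by
    rw [isBp_zero_unique (isBp_of_mem_bip a), isBp_zero_unique (isBp_of_mem_bip b)])⟩
  rw [Fintype.sum_subsingleton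
    (fun p : BipartitionOf 0 => eN 0 p.1 * eN 0 p.1) ⟨zp, isBp_zp⟩]
  show eN 0 zp * eN 0 zp = 1
  rw [eN_zp]

lemma T_succ (n : ℕ) :
    Nat.card (Σ p : BipartitionOf (n + 1), SYBchain (n + 1) p.1 × SYBchain (n + 1) p.1) =
      2 * (n + 1) *
        Nat.card (Σ p : BipartitionOf n, SYBchain n p.1 × SYBchain n p.1) := by
  have E1 : (Σ q : BipartitionOf (n + 1),
        Σ p : Cov n q.1, SYBchain n p.1 × SYBchain (n + 1) q.1) ≃
      (Σ q : BipartitionOf (n + 1), SYBchain (n + 1) q.1 × SYBchain (n + 1) q.1) :=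
    Equiv.sigmaCongrRight (fun q =>
      ((Equiv.sigmaProdDistrib _ _).symm.trans
        (Equiv.prodCongr (Equiv.ofBijective _ (extendChain_bijective (isBp_of_mem_bip q)))
          (Equiv.refl _))))
  rw [← Nat.card_congr E1, Nat.card_congr (shuffleT (n := n))]
  have e2 : Nat.card (Σ p : BipartitionOf n,
        Σ q : CovUp n p.1, SYBchain n p.1 × SYBchain (n + 1) q.1) =
      ∑ p : BipartitionOf n, ∑ q : CovUp n p.1, eN n p.1 * eN (n + 1) q.1 := by
    rw [my_card_sigma]
    refine Finset.sum_congr rfl (fun p _ => ?_)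
    rw [my_card_sigma]
    exact Finset.sum_congr rfl (fun q _ => Nat.card_prod _ _)
  rw [e2, T_eq]
  rw [Finset.mul_sum]
  refine Finset.sum_congr rfl (fun p _ => ?_)
  rw [← Finset.mul_sum, upSum n (isBp_of_mem_bip p)]
  ring

end SYB8


/-- `Σ_{(μ,ν) ∈ Q_n} |SYB(μ,ν)|² = 2^n · n!`, the order of the Weyl
group of type `C_n`. -/
theorem sum_sq_SYB_eq_card_weyl_C (n : ℕ) :
    Nat.card (Σ p : BipartitionOf n, SYBchain n p.1 × SYBchain n p.1) =
      2 ^ n * n.factorial := by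
  induction n with
  | zero => exact SYB8.T_zero
  | succ n ih =>
      rw [SYB8.T_succ n, ih, pow_succ, Nat.factorial_succ]
      ring
end

section
/- Let x be a nilpotent endomorphism of a 2n-dimensional symplectic vector space V whose Jordan type is of the form λ ∪ λ (each part repeated twice), and let F₁ = ℂv₁ with v₁ ∈ ker(x), v₁ ≠ 0. Let m̄ be maximal with λ_{m̄} equal to the largest j such that v₁ ∈ im(x^{j-1}). Then the Jordan type of the induced endomorphism of F₁^⊥/F₁ is λ' ∪ λ', where λ' is obtained from λ by decreasing λ_{m̄} by 1. -/
/-!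
Let `P = F₁^⊥` and `x̄` the endomorphism induced on `P / F₁`. Quotienting by the line `F₁ ⊆ P`
gives `dim ker x̄^k = dim (P ∩ (x^k)⁻¹ F₁) - 1`, and since `x^k` is self-adjoint for a
nondegenerate form, `im x^k = (ker x^k)^⊥`.
If `k < j₀`, then `v₁ = x^k y` lies in `im x^k`, so `(x^k)⁻¹ F₁` has dimension `dim ker x^k + 1`;
it lies in `P` because `B (x^k y) w = B y (x^k w) ∈ ℂ · B y (x^k y) = 0`. Hence
`dim ker x̄^k = dim ker x^k`, matching `min (λ_m̄ - 1) k = min λ_m̄ k`.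
If `k ≥ j₀`, then `v₁ ∉ im x^k`, so `(x^k)⁻¹ F₁ = ker x^k` is not contained in `P` and meets it
in a hyperplane. Hence `dim ker x̄^k = dim ker x^k - 2`, matching
`min (λ_m̄ - 1) k = min λ_m̄ k - 1`.
-/

open Module LinearMap LinearMap.BilinForm Submodule

section RankNullity

variable {K V V₂ : Type*} [Field K] [AddCommGroup V] [Module K V] [AddCommGroup V₂] [Module K V₂]

theorem Submodule.finrank_comap_subtype (P W : Submodule K V) :
    finrank K (W.comap P.subtype) = finrank K ↥(P ⊓ W) := by
  rw [← finrank_map_subtype_eq, map_comap_subtype]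

theorem LinearMap.comap_span_singleton_eq_ker {f : V →ₗ[K] V₂} {v : V₂} (hv : v ∉ range f) :
    (K ∙ v).comap f = ker f := by
  refine le_antisymm (fun w hw => ?_) (ker_le_comap f)
  obtain ⟨c, hc⟩ := mem_span_singleton.mp hw
  rcases eq_or_ne c 0 with rfl | hc0
  · simpa [eq_comm] using hc
  · exact absurd ⟨c⁻¹ • w, by rw [map_smul, ← hc, inv_smul_smul₀ hc0]⟩ hv

variable [FiniteDimensional K V]

theorem Submodule.finrank_map_add_finrank_inf_ker_s10 (f : V →ₗ[K] V₂) (S : Submodule K V) :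
    finrank K (S.map f) + finrank K ↥(S ⊓ ker f) = finrank K S := by
  rw [← range_domRestrict, ← finrank_comap_subtype, ← ker_domRestrict]
  exact finrank_range_add_finrank_ker _

theorem LinearMap.finrank_comap_eq_finrank_ker_add (f : V →ₗ[K] V₂) (W : Submodule K V₂) :
    finrank K (W.comap f) = finrank K (ker f) + finrank K ↥(range f ⊓ W) := by
  rw [← finrank_map_add_finrank_inf_ker_s10 f (W.comap f), map_comap_eq,
    inf_eq_right.mpr (ker_le_comap f), add_comm]

theorem LinearMap.finrank_comap_span_singleton_of_mem_range {f : V →ₗ[K] V₂} {v : V₂} (hv0 : v ≠ 0)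
    (hv : v ∈ range f) : finrank K ((K ∙ v).comap f) = finrank K (ker f) + 1 := by
  rw [finrank_comap_eq_finrank_ker_add, inf_eq_right.mpr ((span_singleton_le_iff_mem _ _).mpr hv),
    finrank_span_singleton hv0]

theorem Module.Dual.finrank_inf_ker_add_one {φ : Dual K V} {W : Submodule K V}
    (hW : ¬ W ≤ ker φ) : finrank K ↥(W ⊓ ker φ) + 1 = finrank K W := by
  have hline : finrank K (W.map φ) = 1 :=
    le_antisymm (by simpa using (W.map φ).finrank_le)
      (one_le_finrank_iff.mpr (by rwa [Ne, ← le_ker_iff_map]))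
  rw [← finrank_map_add_finrank_inf_ker_s10 φ W, hline, add_comm]

theorem Submodule.finrank_ker_mapQ_add_finrank_s10 (L : Submodule K V) (g : V →ₗ[K] V)
    (hg : L ≤ L.comap g) :
    finrank K (ker (L.mapQ L g hg)) + finrank K L = finrank K (L.comap g) := by
  rw [ker_mapQ, ← finrank_map_add_finrank_inf_ker_s10 L.mkQ (L.comap g), ker_mkQ,
    inf_eq_right.mpr hg]

theorem Submodule.finrank_ker_mapQ_comap_subtype_add_finrank {P W : Submodule K V} (hW : W ≤ P)
    (f : Module.End K V) (g : Module.End K P) (hg : ∀ p, (g p : V) = f p)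
    (h : W.comap P.subtype ≤ (W.comap P.subtype).comap g) :
    finrank K (ker ((W.comap P.subtype).mapQ _ g h)) + finrank K W =
      finrank K ↥(P ⊓ W.comap f) := by
  have hcomap : (W.comap P.subtype).comap g = (W.comap f).comap P.subtype := by
    ext p
    simp [hg]
  have := finrank_ker_mapQ_add_finrank_s10 _ g h
  rwa [hcomap, finrank_comap_subtype, finrank_comap_subtype, inf_eq_right.mpr hW] at this

end RankNullity

theorem Module.End.range_pow_antitone {R M : Type*} [Semiring R] [AddCommMonoid M] [Module R M]
    (f : Module.End R M) : Antitone fun k : ℕ => range (f ^ k) :=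
  antitone_nat_of_succ_le fun k => by
    rw [pow_succ, Module.End.mul_eq_comp]
    exact range_comp_le_range _ _

theorem finsum_update_add {α M : Type*} [AddCommMonoid M] [DecidableEq α] {f : α → M}
    (hf : f.HasFiniteSupport) (a : α) (b : M) :
    ∑ᶠ i, Function.update f a b i + f a = ∑ᶠ i, f i + b := by
  set s := insert a hf.toFinset
  have ha : a ∈ s := Finset.mem_insert_self _ _
  have hsupp (g : α → M) (hg : ∀ i ≠ a, g i = f i) : g.support ⊆ s := fun i hi => by
    rcases eq_or_ne i a with rfl | hia
    · exact ha
    · refine Finset.mem_insert_of_mem (hf.mem_toFinset.mpr ?_)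
      rwa [Function.mem_support, ← hg i hia]
  rw [finsum_eq_sum_of_support_subset f (hsupp f fun _ _ => rfl),
    finsum_eq_sum_of_support_subset _ (hsupp _ fun i hi => Function.update_of_ne hi _ _),
    Finset.sum_update_of_mem ha, ← Finset.add_sum_erase s f ha, Finset.sdiff_singleton_eq_erase]
  abel

section BilinForm

variable {K V : Type*} [Field K] [AddCommGroup V] [Module K V] {B : LinearMap.BilinForm K V}
  {T : Module.End K V}

theorem LinearMap.IsAdjointPair.pow (hT : IsAdjointPair B B T T) (k : ℕ) :
    IsAdjointPair B B ⇑(T ^ k) ⇑(T ^ k) := by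
  induction k with
  | zero => exact isAdjointPair_one
  | succ k ih => simpa only [← pow_succ, ← pow_succ'] using ih.mul hT

theorem LinearMap.BilinForm.IsAlt.apply_apply_self_eq_zero [CharZero K] (hB : B.IsAlt)
    (hT : IsAdjointPair B B T T) (u : V) : B u (T u) = 0 := by
  have h := hB.neg_eq (T u) u
  rw [hT u u] at h
  exact add_self_eq_zero.mp (by nth_rewrite 1 [← h]; exact neg_add_cancel _)

theorem LinearMap.BilinForm.range_eq_orthogonal_ker [FiniteDimensional K V] (hB : B.Nondegenerate)
    (hT : IsAdjointPair B B T T) : range T = B.orthogonal (ker T) := by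
  refine eq_of_le_of_finrank_eq ?_ ?_
  · rintro _ ⟨u, rfl⟩ m hm
    rw [← hT m u, mem_ker.mp hm, LinearMap.map_zero₂]
  · rw [finrank_orthogonal hB, ← finrank_range_add_finrank_ker T, Nat.add_sub_cancel]

theorem LinearMap.BilinForm.comap_span_singleton_le_orthogonal [CharZero K] (hB : B.IsAlt)
    (hT : IsAdjointPair B B T T) {v : V} (hv : v ∈ range T) :
    (K ∙ v).comap T ≤ B.orthogonal (K ∙ v) := by
  obtain ⟨y, rfl⟩ := hv
  intro w hw
  obtain ⟨c, hc⟩ := mem_span_singleton.mp hw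
  rw [orthogonal_span_singleton_eq_toLin_ker, mem_ker]
  change B (T y) w = 0
  rw [hT, ← hc, map_smul, smul_eq_mul, hB.apply_apply_self_eq_zero hT, mul_zero]

theorem LinearMap.BilinForm.not_ker_le_orthogonal_span_singleton [FiniteDimensional K V]
    (hB : B.Nondegenerate) (hBr : B.IsRefl) (hT : IsAdjointPair B B T T) {v : V}
    (hv : v ∉ range T) : ¬ ker T ≤ B.orthogonal (K ∙ v) := by
  intro h
  apply hv
  rw [range_eq_orthogonal_ker hB hT]
  exact fun m hm => hBr _ _ (h hm v (mem_span_singleton_self v))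

theorem LinearMap.BilinForm.finrank_inf_orthogonal_span_singleton_add_one [FiniteDimensional K V]
    {v : V} {W : Submodule K V} (hW : ¬ W ≤ B.orthogonal (K ∙ v)) :
    finrank K ↥(W ⊓ B.orthogonal (K ∙ v)) + 1 = finrank K W := by
  rw [orthogonal_span_singleton_eq_toLin_ker] at hW ⊢
  exact Dual.finrank_inf_ker_add_one hW

end BilinForm

theorem jordanType_perp_mod_line_general
    (V : Type*) [AddCommGroup V] [Module ℂ V] [FiniteDimensional ℂ V]
    (B : LinearMap.BilinForm ℂ V)
    (hskew : ∀ v w : V, B v w = - B w v)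
    (hnondeg : ∀ v : V, (∀ w : V, B v w = 0) → v = 0)
    (x : Module.End ℂ V)
    (hself : ∀ v w : V, B (x v) w = B v (x w))
    (lam : ℕ → ℕ)
    (hjordan : ∀ k : ℕ,
      Module.finrank ℂ (LinearMap.ker (x ^ k)) = 2 * ∑ᶠ i, min (lam i) k)
    (v₁ : V) (hv₁0 : v₁ ≠ 0)
    (j₀ : ℕ) (hj₀ : 1 ≤ j₀)
    (hmem : v₁ ∈ LinearMap.range (x ^ (j₀ - 1)))
    (hnotmem : v₁ ∉ LinearMap.range (x ^ j₀))
    (mbar : ℕ) (hmbar : lam mbar = j₀)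
    -- the perpendicular `F₁^⊥` is `x`-invariant, the line `F₁` sits inside it,
    -- and the induced endomorphism of `F₁^⊥/F₁` is built from these data:
    (hPx : ∀ w ∈ B.orthogonal (Submodule.span ℂ {v₁}), x w ∈
      B.orthogonal (Submodule.span ℂ {v₁}))
    (L : Submodule ℂ (B.orthogonal (Submodule.span ℂ {v₁})))
    (hL : L = (Submodule.span ℂ {v₁}).comap (B.orthogonal (Submodule.span ℂ {v₁})).subtype)
    (hLmap : L ≤ L.comap (x.restrict hPx)) :
    ∀ k : ℕ,
      Module.finrank ℂ (LinearMap.ker ((Submodule.mapQ L L (x.restrict hPx) hLmap) ^ k)) =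
        2 * ∑ᶠ i, min (Function.update lam mbar (lam mbar - 1) i) k := by
  intro k
  have hB : B.IsAlt := isAlt_iff_eq_neg_flip.mpr (LinearMap.ext₂ hskew)
  have hBnd : B.Nondegenerate := hB.isRefl.nondegenerate_iff_separatingLeft.mpr hnondeg
  have hT : IsAdjointPair B B ⇑(x ^ k) ⇑(x ^ k) := IsAdjointPair.pow hself k
  have hF₁P : ℂ ∙ v₁ ≤ B.orthogonal (ℂ ∙ v₁) := by
    rw [span_singleton_le_iff_mem, orthogonal_span_singleton_eq_toLin_ker]
    exact hB.self_eq_zero v₁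
  have hquot : finrank ℂ (ker ((L.mapQ L (x.restrict hPx) hLmap) ^ k)) + 1 =
      finrank ℂ ↥(B.orthogonal (ℂ ∙ v₁) ⊓ (ℂ ∙ v₁).comap (x ^ k)) := by
    subst hL
    rw [← mapQ_pow, ← finrank_span_singleton (K := ℂ) hv₁0]
    exact finrank_ker_mapQ_comap_subtype_add_finrank hF₁P (x ^ k) _
      (fun p => by rw [Module.End.pow_restrict]; rfl) _
  have hupdate : ∀ i, min (Function.update lam mbar (lam mbar - 1) i) k =
      Function.update (fun i => min (lam i) k) mbar (min (j₀ - 1) k) i := fun i => by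
    rw [hmbar]
    exact Function.apply_update (fun _ a => min a k) lam mbar (j₀ - 1) i
  rcases lt_or_ge k j₀ with hk | hk
  · have hv : v₁ ∈ range (x ^ k) := (x.range_pow_antitone (by omega : k ≤ j₀ - 1)) hmem
    rw [inf_eq_right.mpr (comap_span_singleton_le_orthogonal hB hT hv),
      finrank_comap_span_singleton_of_mem_range hv₁0 hv, hjordan] at hquot
    have hmin : min (j₀ - 1) k = min (lam mbar) k := by omega
    rw [finsum_congr hupdate, hmin, Function.update_eq_self]
    omega
  · have hv : v₁ ∉ range (x ^ k) := fun h => hnotmem (x.range_pow_antitone hk h)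
    have hker := finrank_inf_orthogonal_span_singleton_add_one
      (not_ker_le_orthogonal_span_singleton hBnd hB.isRefl hT hv)
    rw [comap_span_singleton_eq_ker hv, inf_comm] at hquot
    rw [hjordan] at hker
    have hfin := hasFiniteSupport_of_finsum_ne_zero (f := fun i => min (lam i) k) (by omega)
    have hsplit := finsum_update_add hfin mbar (min (j₀ - 1) k)
    rw [finsum_congr hupdate]
    eta_reduce at hsplit
    omega

/-- Let `x` be a nilpotent self-adjoint endomorphism of a `2n`-dimensional
symplectic space `V` whose Jordan type is `λ ∪ λ` (encoded by the kernel-dimension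
condition `dim ker(x^k) = 2·Σᵢ min(λᵢ, k)`), and let `F₁ = ℂv₁` with `0 ≠ v₁ ∈ ker x`.
Let `j₀` be the largest `j` with `v₁ ∈ im(x^(j-1))` and `m̄` maximal with `λ_m̄ = j₀`.
Then the Jordan type of the induced endomorphism of `F₁^⊥/F₁` is `λ' ∪ λ'`, where `λ'`
is obtained from `λ` by decreasing `λ_m̄` by one. -/
theorem jordanType_perp_mod_line
    (V : Type*) [AddCommGroup V] [Module ℂ V] [FiniteDimensional ℂ V]
    (B : LinearMap.BilinForm ℂ V)
    (hskew : ∀ v w : V, B v w = - B w v)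
    (hnondeg : ∀ v : V, (∀ w : V, B v w = 0) → v = 0)
    (x : Module.End ℂ V) (hx : IsNilpotent x)
    (hself : ∀ v w : V, B (x v) w = B v (x w))
    (n : ℕ) (hdim : Module.finrank ℂ V = 2 * n)
    (lam : ℕ → ℕ) (hlam : Antitone lam) (hfin : ∃ K, ∀ i ≥ K, lam i = 0)
    (hjordan : ∀ k : ℕ,
      Module.finrank ℂ (LinearMap.ker (x ^ k)) = 2 * ∑ᶠ i, min (lam i) k)
    (v₁ : V) (hv₁0 : v₁ ≠ 0) (hv₁ : v₁ ∈ LinearMap.ker x)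
    (j₀ : ℕ) (hj₀ : 1 ≤ j₀)
    (hmem : v₁ ∈ LinearMap.range (x ^ (j₀ - 1)))
    (hnotmem : v₁ ∉ LinearMap.range (x ^ j₀))
    (mbar : ℕ) (hmbar : lam mbar = j₀) (hmbarmax : lam (mbar + 1) < j₀)
    -- the perpendicular `F₁^⊥` is `x`-invariant, the line `F₁` sits inside it,
    -- and the induced endomorphism of `F₁^⊥/F₁` is built from these data:
    (hPx : ∀ w ∈ B.orthogonal (Submodule.span ℂ {v₁}), x w ∈
      B.orthogonal (Submodule.span ℂ {v₁}))
    (L : Submodule ℂ (B.orthogonal (Submodule.span ℂ {v₁})))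
    (hL : L = (Submodule.span ℂ {v₁}).comap (B.orthogonal (Submodule.span ℂ {v₁})).subtype)
    (hLmap : L ≤ L.comap (x.restrict hPx)) :
    ∀ k : ℕ,
      Module.finrank ℂ (LinearMap.ker ((Submodule.mapQ L L (x.restrict hPx) hLmap) ^ k)) =
        2 * ∑ᶠ i, min (Function.update lam mbar (lam mbar - 1) i) k :=
  jordanType_perp_mod_line_general V B hskew hnondeg x hself lam hjordan v₁ hv₁0 j₀ hj₀ hmem hnotmem
    mbar hmbar hPx L hL hLmap
end

section
/- Let x be a nilpotent endomorphism of V, v ∈ V, and F₁ = ℂv₁ with v₁ ∈ ker(x) and v₁ ∉ ℂ[x]v. Then the Jordan type of the endomorphism induced by x on V/(ℂ[x]v + F₁) is obtained from the Jordan type ρ of x on V/ℂ[x]v by deleting the box at the bottom of the k-th column, where k is maximal such that F₁ ⊆ ker(x) ∩ (im(x^{k-1}) + ℂ[x]v). -/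
open Submodule Module

private lemma finrank_map_mkQ_aux (V : Type*) [AddCommGroup V] [Module ℂ V]
    [FiniteDimensional ℂ V] (p S : Submodule ℂ V) (h : p ≤ S) :
    finrank ℂ (S.map p.mkQ) + finrank ℂ p = finrank ℂ S := by
  have h1 := LinearMap.finrank_range_add_finrank_ker (p.mkQ.domRestrict S)
  rw [LinearMap.range_domRestrict, LinearMap.ker_domRestrict, Submodule.ker_mkQ] at h1
  rw [← h1, (Submodule.comapSubtypeEquivOfLe h).finrank_eq]

private lemma finrank_sup_line_aux (V : Type*) [AddCommGroup V] [Module ℂ V]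
    [FiniteDimensional ℂ V] (C : Submodule ℂ V) (u : V) (hu : u ∉ C) :
    finrank ℂ ↥(C ⊔ Submodule.span ℂ {u}) = finrank ℂ C + 1 := by
  have hu0 : u ≠ 0 := fun h => hu (h ▸ C.zero_mem)
  have hinf : C ⊓ Submodule.span ℂ {u} = ⊥ := by
    rw [eq_bot_iff]
    rintro w ⟨hwC, hws⟩
    obtain ⟨a, rfl⟩ := Submodule.mem_span_singleton.mp hws
    rcases eq_or_ne a 0 with rfl | ha
    · simp
    · refine absurd ?_ hu
      have h2 := C.smul_mem a⁻¹ hwC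
      rwa [smul_smul, inv_mul_cancel₀ ha, one_smul] at h2
  have := Submodule.finrank_sup_add_finrank_inf_eq C (Submodule.span ℂ {u})
  rw [hinf, finrank_span_singleton hu0] at this
  simpa using this

private lemma ker_mapQ_aux (V : Type*) [AddCommGroup V] [Module ℂ V]
    (p : Submodule ℂ V) (f : V →ₗ[ℂ] V) (h : p ≤ p.comap f) :
    LinearMap.ker (Submodule.mapQ p p f h) = (p.comap f).map p.mkQ := by
  rw [Submodule.mapQ, Submodule.ker_liftQ, LinearMap.ker_comp, Submodule.ker_mkQ]

/-- Let `x` be nilpotent on `V`, `v ∈ V`, and `F₁ = ℂv₁` with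
`v₁ ∈ ker x`, `v₁ ∉ ℂ[x]v`.  Then the Jordan type of the endomorphism induced by `x` on
`V/(ℂ[x]v + F₁)` is obtained from the Jordan type `ρ` of `x` on `V/ℂ[x]v` by deleting the
box at the bottom of the `k`-th column, where `k` is maximal with
`F₁ ⊆ ker x ∩ (im(x^(k-1)) + ℂ[x]v)`.  (Equivalently, in kernel dimensions of powers:
the dimension drops by `1` exactly for powers `t ≥ k`.) -/
theorem jordanType_quotient_cyclic_plus_line
    (V : Type*) [AddCommGroup V] [Module ℂ V] [FiniteDimensional ℂ V]
    (x : Module.End ℂ V) (hx : IsNilpotent x)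
    (v v₁ : V) (hv₁ : v₁ ∈ LinearMap.ker x)
    (C : Submodule ℂ V)
    (hC : C = Submodule.span ℂ (Set.range fun i : ℕ => (x ^ i) v))
    (hnot : v₁ ∉ C)
    (k : ℕ) (hk : 1 ≤ k)
    (hkle : Submodule.span ℂ {v₁} ≤ LinearMap.ker x ⊓ (LinearMap.range (x ^ (k - 1)) ⊔ C))
    (hkmax : ¬ Submodule.span ℂ {v₁} ≤ LinearMap.ker x ⊓ (LinearMap.range (x ^ k) ⊔ C))
    (hCmap : C ≤ C.comap x)
    (hCFmap : C ⊔ Submodule.span ℂ {v₁} ≤ (C ⊔ Submodule.span ℂ {v₁}).comap x) :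
    ∀ t : ℕ,
      Module.finrank ℂ (LinearMap.ker
          ((Submodule.mapQ (C ⊔ Submodule.span ℂ {v₁}) (C ⊔ Submodule.span ℂ {v₁}) x
            hCFmap) ^ t)) =
        Module.finrank ℂ (LinearMap.ker ((Submodule.mapQ C C x hCmap) ^ t)) -
          (if k ≤ t then 1 else 0) := by
  intro t
  suffices H : ∀ (D : Submodule ℂ V), C ⊔ Submodule.span ℂ {v₁} = D →
      ∀ (hDmap : D ≤ D.comap x),
      finrank ℂ (LinearMap.ker ((Submodule.mapQ D D x hDmap) ^ t)) =
        finrank ℂ (LinearMap.ker ((Submodule.mapQ C C x hCmap) ^ t)) -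
          (if k ≤ t then 1 else 0) by
    exact H _ rfl hCFmap
  intro D hD hDmap
  have hmemD : ∀ {w : V}, w ∈ D ↔ w ∈ C ⊔ Submodule.span ℂ {v₁} := fun {w} => by rw [hD]
  have hxv₁ : x v₁ = 0 := hv₁
  have hCD : C ≤ D := hD ▸ le_sup_left
  have frD : finrank ℂ D = finrank ℂ C + 1 := hD ▸ finrank_sup_line_aux V C v₁ hnot
  -- rewrite the kernels
  rw [← Submodule.mapQ_pow, ← Submodule.mapQ_pow, ker_mapQ_aux, ker_mapQ_aux]
  have hDt : D ≤ D.comap (x ^ t) := D.le_comap_pow_of_le_comap hDmap t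
  have hCt : C ≤ C.comap (x ^ t) := C.le_comap_pow_of_le_comap hCmap t
  have e1 := finrank_map_mkQ_aux V D (D.comap (x ^ t)) hDt
  have e2 := finrank_map_mkQ_aux V C (C.comap (x ^ t)) hCt
  -- membership facts
  have hv₁mem : v₁ ∈ LinearMap.range (x ^ (k - 1)) ⊔ C :=
    (hkle (Submodule.mem_span_singleton_self v₁)).2
  have hv₁not : v₁ ∉ LinearMap.range (x ^ k) ⊔ C := by
    intro hmem
    exact hkmax fun w hw => by
      obtain ⟨a, rfl⟩ := Submodule.mem_span_singleton.mp hw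
      exact ⟨by simpa [map_smul, hxv₁] using (LinearMap.ker x).smul_mem a hv₁,
        Submodule.smul_mem _ a hmem⟩
  by_cases hkt : k ≤ t
  · -- t ≥ k : comap (x^t) D = comap (x^t) C, and dim drops
    have hrange : LinearMap.range (x ^ t) ≤ LinearMap.range (x ^ k) := by
      have hxt : x ^ t = (x ^ k).comp (x ^ (t - k)) := by
        rw [← Module.End.mul_eq_comp, ← pow_add]; congr 1; omega
      rw [hxt]; exact LinearMap.range_comp_le_range _ _
    have hv₁t : v₁ ∉ LinearMap.range (x ^ t) ⊔ C :=
      fun hmem => hv₁not (sup_le_sup_right hrange C hmem)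
    have hcomap_eq : D.comap (x ^ t) = C.comap (x ^ t) := by
      apply le_antisymm
      · intro w hw
        rw [Submodule.mem_comap] at hw ⊢
        obtain ⟨c, hc, z, hz, hcz⟩ := Submodule.mem_sup.mp (hmemD.mp hw)
        obtain ⟨a, rfl⟩ := Submodule.mem_span_singleton.mp hz
        rcases eq_or_ne a 0 with rfl | ha
        · rw [← hcz]; simpa using hc
        · exfalso
          apply hv₁t
          have : v₁ = a⁻¹ • ((x ^ t) w) - a⁻¹ • c := by
            rw [← hcz]; rw [smul_add, smul_smul, inv_mul_cancel₀ ha, one_smul]; abel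
          rw [this]
          exact Submodule.sub_mem _
            (Submodule.smul_mem _ _ (Submodule.mem_sup_left ⟨w, rfl⟩))
            (Submodule.smul_mem _ _ (Submodule.mem_sup_right hc))
      · exact Submodule.comap_mono hCD
    -- v₁ ∈ comap (x^t) C since t ≥ 1
    have hxtv₁ : (x ^ t) v₁ = 0 := by
      obtain ⟨s, rfl⟩ : ∃ s, t = s + 1 := ⟨t - 1, by omega⟩
      rw [pow_succ, Module.End.mul_apply, hxv₁, map_zero]
    have hDle : D ≤ C.comap (x ^ t) := by
      rw [← hD]
      refine sup_le hCt ?_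
      rw [Submodule.span_le, Set.singleton_subset_iff]
      exact by simp [Submodule.mem_comap, hxtv₁]
    have hge : finrank ℂ C + 1 ≤ finrank ℂ (C.comap (x ^ t)) :=
      frD ▸ Submodule.finrank_mono hDle
    simp only [hkt, if_true]
    rw [hcomap_eq] at e1 ⊢
    omega
  · -- t < k : v₁ ∈ range (x^t) ⊔ C, comap gains a line
    have hrange : LinearMap.range (x ^ (k - 1)) ≤ LinearMap.range (x ^ t) := by
      have hxt : x ^ (k - 1) = (x ^ t).comp (x ^ (k - 1 - t)) := by
        rw [← Module.End.mul_eq_comp, ← pow_add]; congr 1; omega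
      rw [hxt]; exact LinearMap.range_comp_le_range _ _
    have hv₁t : v₁ ∈ LinearMap.range (x ^ t) ⊔ C := sup_le_sup_right hrange C hv₁mem
    obtain ⟨r, hr, c, hc, hrc⟩ := Submodule.mem_sup.mp hv₁t
    obtain ⟨u, rfl⟩ := hr
    have huD : u ∈ D.comap (x ^ t) := by
      rw [Submodule.mem_comap]
      have : (x ^ t) u = v₁ - c := by rw [← hrc]; abel
      rw [this]
      exact hmemD.mpr (Submodule.sub_mem _
        (Submodule.mem_sup_right (Submodule.mem_span_singleton_self v₁))
        (Submodule.mem_sup_left hc))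
    have huC : u ∉ C.comap (x ^ t) := by
      intro hu
      rw [Submodule.mem_comap] at hu
      exact hnot (by rw [← hrc]; exact C.add_mem hu hc)
    have hsup : D.comap (x ^ t) = C.comap (x ^ t) ⊔ Submodule.span ℂ {u} := by
      apply le_antisymm
      · intro w hw
        rw [Submodule.mem_comap] at hw
        obtain ⟨c', hc', z, hz, hcz⟩ := Submodule.mem_sup.mp (hmemD.mp hw)
        obtain ⟨a, rfl⟩ := Submodule.mem_span_singleton.mp hz
        have hwau : w - a • u ∈ C.comap (x ^ t) := by
          rw [Submodule.mem_comap, map_sub, map_smul]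
          have hxu : (x ^ t) u = v₁ - c := by rw [← hrc]; abel
          rw [hxu]
          have : (x ^ t) w - a • (v₁ - c) = c' + a • c := by
            rw [← hcz]; rw [smul_sub]; abel
          rw [this]
          exact C.add_mem hc' (C.smul_mem a hc)
        have : w = (w - a • u) + a • u := by abel
        rw [this]
        exact Submodule.add_mem _ (Submodule.mem_sup_left hwau)
          (Submodule.mem_sup_right (Submodule.smul_mem _ a (Submodule.mem_span_singleton_self u)))
      · exact sup_le (Submodule.comap_mono hCD)
          (by rw [Submodule.span_le, Set.singleton_subset_iff]; exact huD)
    have frcomap : finrank ℂ (D.comap (x ^ t)) = finrank ℂ (C.comap (x ^ t)) + 1 := by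
      rw [hsup]; exact finrank_sup_line_aux V _ u huC
    simp only [hkt, if_false]
    omega
end

section
/- For w in the type C Weyl group W(C_n) = {w ∈ S_{2n} : w(2n+1−i) = 2n+1−w(i) for all i}, define S(w) = {(i,j) : 1 ≤ i < j < 2n+1−i, w^{-1}(i) < w^{-1}(j)}. Then |S(w)| + #{i ≤ n : w(i) ≤ n} = n² − ℓ(w), where ℓ(w) is the length of w with respect to the standard generators of W(C_n) and n² is the number of positive roots of type C_n. -/
/-- The standard Coxeter generators of the Weyl group `W(Cₙ)`, realized inside `S_{2n}`
(0-indexed): `s₀` swaps positions `n-1, n`, and for `1 ≤ i ≤ n-1`, `sᵢ` swaps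
`n-i-1, n-i` and simultaneously `n+i-1, n+i`. -/
def typeCGenerators (n : ℕ) : Set (Equiv.Perm (Fin (2 * n))) :=
  {g | (∃ _h : 0 < n,
          g = Equiv.swap (⟨n - 1, by omega⟩ : Fin (2 * n)) ⟨n, by omega⟩) ∨
       (∃ i : ℕ, ∃ _h1 : 1 ≤ i, ∃ _h2 : i ≤ n - 1, ∃ _h3 : 0 < n,
          g = Equiv.swap (⟨n - i - 1, by omega⟩ : Fin (2 * n)) ⟨n - i, by omega⟩ *
              Equiv.swap (⟨n + i - 1, by omega⟩ : Fin (2 * n)) ⟨n + i, by omega⟩)}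

/-- `w` is a product of `k` of the type-C generators. -/
def IsProdOfGens (n k : ℕ) (w : Equiv.Perm (Fin (2 * n))) : Prop :=
  ∃ l : List (Equiv.Perm (Fin (2 * n))),
    l.length = k ∧ (∀ g ∈ l, g ∈ typeCGenerators n) ∧ l.prod = w

/-!
Put `τ = w⁻¹`; it commutes with `Fin.rev`. Its inversions `(p, q)` are paired by
`(p, q) ↦ (q.rev, p.rev)`, which swaps the two sides of the antidiagonal `p + q = 2n - 1`, and the
inversions on the antidiagonal correspond to the "negatives" `p < n` with `n ≤ τ p`. Hence
`length τ`, the number of inversions below the antidiagonal plus the number of negatives, is half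
of `#inversions + #negatives`. A simple reflection is one adjacent transposition (`s₀`) or a
rev-symmetric pair of them (`sᵢ`), so right multiplication by it moves `length` by exactly one;
unless `τ = 1` some simple reflection lowers it, since a `τ` ascending at every simple position is
monotone. Thus `length τ` is the Coxeter length of `w`, and the theorem is complementary
counting: `S(w)` and the lower inversions partition the `n² - n` pairs below the antidiagonal,
and the `i < n` with `w i < n` together with the negatives of `w⁻¹` are `n` in number.
-/

open Finset Equiv

namespace Equiv.Perm

variable {α : Type*} [LinearOrder α]

lemma swap_apply_lt_swap_apply {a b p q : α} (hab : a ⋖ b) (hpq : p < q)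
    (hne : (p, q) ≠ (a, b)) : swap a b p < swap a b q := by
  rcases eq_or_ne p a with rfl | hpa
  · have hqb : q ≠ b := fun h => hne (by rw [h])
    rw [swap_apply_left, swap_apply_of_ne_of_ne hpq.ne' hqb]
    exact lt_of_le_of_ne (hab.ge_of_gt hpq) hqb.symm
  rcases eq_or_ne p b with rfl | hpb
  · rw [swap_apply_right, swap_apply_of_ne_of_ne (hab.lt.trans hpq).ne' hpq.ne']
    exact hab.lt.trans hpq
  rw [swap_apply_of_ne_of_ne hpa hpb]
  rcases eq_or_ne q a with rfl | hqa
  · rw [swap_apply_left]; exact hpq.trans hab.lt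
  rcases eq_or_ne q b with rfl | hqb
  · rw [swap_apply_right]; exact lt_of_le_of_ne (hab.le_of_lt hpq) hpa
  rwa [swap_apply_of_ne_of_ne hqa hqb]

variable [Fintype α]

def inversions (τ : Perm α) : Finset (α × α) := {x | x.1 < x.2 ∧ τ x.2 < τ x.1}

lemma mem_inversions {τ : Perm α} {x : α × α} :
    x ∈ τ.inversions ↔ x.1 < x.2 ∧ τ x.2 < τ x.1 := by
  simp [inversions]

lemma card_inversions_mul_swap (τ : Perm α) {a b : α} (hab : a ⋖ b) (h : τ a < τ b) :
    #(τ * swap a b).inversions = #τ.inversions + 1 := by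
  have hmem : (a, b) ∈ (τ * swap a b).inversions := by
    simpa [mem_inversions, hab.lt] using h
  rw [← card_erase_add_one hmem]
  congr 1
  refine card_equiv (prodCongr (swap a b) (swap a b)) fun x => ?_
  simp only [mem_erase, mem_inversions, prodCongr_apply, Prod.map_fst, Prod.map_snd, coe_mul,
    Function.comp_apply]
  constructor
  · rintro ⟨hne, hlt, hτ⟩
    exact ⟨swap_apply_lt_swap_apply hab hlt hne, hτ⟩
  · rintro ⟨hlt, hτ⟩
    refine ⟨?_, ?_, hτ⟩
    · rintro rfl
      simp only [swap_apply_left, swap_apply_right] at hlt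
      exact hlt.not_gt hab.lt
    · have hne : (swap a b x.1, swap a b x.2) ≠ (a, b) := by
        intro he
        simp only [Prod.mk.injEq] at he
        rw [he.1, he.2] at hτ
        exact hτ.not_gt h
      simpa using swap_apply_lt_swap_apply hab hlt hne

end Equiv.Perm

lemma Fin.covBy_iff_val_add_one_eq {m : ℕ} {a b : Fin m} : a ⋖ b ↔ (a : ℕ) + 1 = b := by
  rw [Fin.covBy_iff, Nat.covBy_iff_add_one_eq]

lemma Fin.swap_apply_rev {m : ℕ} (a b i : Fin m) : swap a b i.rev = (swap a.rev b.rev i).rev := by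
  simpa using Fin.rev_injective.swap_apply a.rev b.rev i

lemma commute_revPerm_iff {m : ℕ} {w : Perm (Fin m)} :
    Commute w Fin.revPerm ↔ ∀ i, w i.rev = (w i).rev := by
  simp [Commute, SemiconjBy, Equiv.ext_iff]

namespace TypeC

variable {n : ℕ}

-- With `Fin.rev` read as negation, positions `≥ n` are the negative letters.
def negatives (τ : Perm (Fin (2 * n))) : Finset (Fin (2 * n)) :=
  {p | (p : ℕ) < n ∧ n ≤ (τ p : ℕ)}

def lowerInversions (τ : Perm (Fin (2 * n))) : Finset (Fin (2 * n) × Fin (2 * n)) :=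
  {x ∈ τ.inversions | (x.1 : ℕ) + x.2 < 2 * n - 1}

def length (τ : Perm (Fin (2 * n))) : ℕ := #(lowerInversions τ) + #(negatives τ)

lemma card_filter_lt_eq_two_mul_add (R : Fin (2 * n) → Fin (2 * n) → Prop) [DecidableRel R]
    (hR : ∀ p q, R q.rev p.rev ↔ R p q) :
    #{x : Fin (2 * n) × Fin (2 * n) | x.1 < x.2 ∧ R x.1 x.2} =
      2 * #{x : Fin (2 * n) × Fin (2 * n) |
          x.1 < x.2 ∧ (x.1 : ℕ) + x.2 < 2 * n - 1 ∧ R x.1 x.2} +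
        #{p : Fin (2 * n) | (p : ℕ) < n ∧ R p p.rev} := by
  let P : Finset (Fin (2 * n) × Fin (2 * n)) := {x | x.1 < x.2 ∧ R x.1 x.2}
  let L := P.filter fun x => (x.1 : ℕ) + x.2 < 2 * n - 1
  let N := P.filter fun x => ¬(x.1 : ℕ) + x.2 < 2 * n - 1
  have hP : #P = #L + #N := (card_filter_add_card_filter_not _).symm
  have hN : #N = #(N.filter fun x => (x.1 : ℕ) + x.2 = 2 * n - 1) +
      #(N.filter fun x => ¬(x.1 : ℕ) + x.2 = 2 * n - 1) :=
    (card_filter_add_card_filter_not _).symm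
  have hL : L = ({x | x.1 < x.2 ∧ (x.1 : ℕ) + x.2 < 2 * n - 1 ∧ R x.1 x.2} :
      Finset (Fin (2 * n) × Fin (2 * n))) := by
    ext x
    simp only [L, P, mem_filter, mem_univ, true_and]
    tauto
  have hupper : #(N.filter fun x => ¬(x.1 : ℕ) + x.2 = 2 * n - 1) = #L := by
    refine card_nbij' (fun x => (x.2.rev, x.1.rev)) (fun x => (x.2.rev, x.1.rev))
      ?_ ?_ ?_ ?_ <;> rintro ⟨p, q⟩ <;>
      simp +contextual [L, N, P, hR, Fin.lt_def, -Fin.val_fin_lt] <;> omega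
  have hmiddle : #(N.filter fun x => (x.1 : ℕ) + x.2 = 2 * n - 1) =
      #{p : Fin (2 * n) | (p : ℕ) < n ∧ R p p.rev} := by
    have hrev : ∀ p q : Fin (2 * n), (p : ℕ) + q = 2 * n - 1 → q = p.rev := fun p q h =>
      Fin.ext (by rw [Fin.val_rev]; omega)
    refine card_nbij' Prod.fst (fun p => (p, p.rev)) ?_ ?_ ?_ ?_
    · rintro ⟨p, q⟩ hx
      simp only [N, P, mem_coe, mem_filter, mem_univ, true_and] at hx ⊢
      obtain rfl := hrev p q hx.2
      exact ⟨by omega, hx.1.1.2⟩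
    · intro p hp
      simp only [N, P, mem_coe, mem_filter, mem_univ, true_and, Fin.lt_def, Fin.val_rev]
        at hp ⊢
      refine ⟨⟨⟨?_, hp.2⟩, ?_⟩, ?_⟩ <;> omega
    · rintro ⟨p, q⟩ hx
      simp only [N, P, mem_coe, mem_filter, mem_univ, true_and] at hx
      rw [hrev p q hx.2]
    · intro p _
      rfl
  show #P = _
  rw [← hL]
  omega

variable {τ : Perm (Fin (2 * n))}

lemma mem_negatives {p : Fin (2 * n)} :
    p ∈ negatives τ ↔ (p : ℕ) < n ∧ n ≤ (τ p : ℕ) := by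
  simp [negatives]

lemma two_mul_length (hτ : Commute τ Fin.revPerm) :
    2 * length τ = #τ.inversions + #(negatives τ) := by
  have h := card_filter_lt_eq_two_mul_add (fun p q => τ q < τ p) fun p q => by
    rw [commute_revPerm_iff.1 hτ, commute_revPerm_iff.1 hτ, Fin.rev_lt_rev]
  have hlow : lowerInversions τ =
      ({x | x.1 < x.2 ∧ (x.1 : ℕ) + x.2 < 2 * n - 1 ∧ τ x.2 < τ x.1} :
        Finset (Fin (2 * n) × Fin (2 * n))) := by
    ext x
    simp only [lowerInversions, Perm.mem_inversions, mem_filter, mem_univ, true_and]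
    tauto
  have hneg : negatives τ = ({p | (p : ℕ) < n ∧ τ p.rev < τ p} : Finset (Fin (2 * n))) := by
    ext p
    simp only [mem_negatives, mem_filter, mem_univ, true_and, commute_revPerm_iff.1 hτ,
      Fin.lt_def, Fin.val_rev]
    omega
  rw [length, hlow, hneg, Perm.inversions, h]
  ring

lemma swap_apply_val_lt_iff {a b p : Fin (2 * n)} (h : (a : ℕ) < n ↔ (b : ℕ) < n) :
    (swap a b p : ℕ) < n ↔ (p : ℕ) < n := by
  rw [swap_apply_def]
  split_ifs with ha hb <;> subst_vars <;> tauto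

lemma card_negatives_mul_of_lt_iff (σ : Perm (Fin (2 * n)))
    (hσ : ∀ p, (σ p : ℕ) < n ↔ (p : ℕ) < n) : #(negatives (τ * σ)) = #(negatives τ) :=
  card_equiv σ fun p => by simp [mem_negatives, hσ]

lemma card_negatives_mul_swap_rev {u : Fin (2 * n)} (hu : u ⋖ u.rev)
    (hτ : Commute τ Fin.revPerm) (h : τ u < τ u.rev) :
    #(negatives (τ * swap u u.rev)) = #(negatives τ) + 1 := by
  rw [Fin.covBy_iff_val_add_one_eq, Fin.val_rev] at hu
  rw [commute_revPerm_iff.1 hτ, Fin.lt_def, Fin.val_rev] at h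
  have hins : negatives (τ * swap u u.rev) = insert u (negatives τ) := by
    ext p
    simp only [mem_negatives, mem_insert, Perm.mul_apply]
    rcases eq_or_ne p u with rfl | hpu
    · simp only [swap_apply_left, commute_revPerm_iff.1 hτ, Fin.val_rev, true_or, iff_true]
      omega
    · have hpu' : (p : ℕ) ≠ u := fun h => hpu (Fin.ext h)
      by_cases hp : (p : ℕ) < n
      · rw [swap_apply_of_ne_of_ne hpu (fun h => by rw [Fin.ext_iff, Fin.val_rev] at h; omega)]
        simp [hpu, hp]
      · simp [hpu, hp]
  rw [hins, card_insert_of_notMem]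
  rw [mem_negatives, not_and, not_le]
  omega

lemma commute_swap_rev (u : Fin (2 * n)) : Commute (swap u u.rev) Fin.revPerm :=
  commute_revPerm_iff.2 fun i => by rw [Fin.swap_apply_rev, Fin.rev_rev, swap_comm]

lemma commute_swap_mul_swap_rev {a a' : Fin (2 * n)}
    (hd : (swap a a').Disjoint (swap a'.rev a.rev)) :
    Commute (swap a a' * swap a'.rev a.rev) Fin.revPerm := by
  refine commute_revPerm_iff.2 fun i => ?_
  rw [Perm.mul_apply, Perm.mul_apply, Fin.swap_apply_rev a'.rev, Fin.rev_rev, Fin.rev_rev,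
    Fin.swap_apply_rev, swap_comm a.rev, swap_comm a']
  exact congrArg Fin.rev (DFunLike.congr_fun hd.commute.eq.symm i)

lemma length_mul_swap_rev {u : Fin (2 * n)} (hu : u ⋖ u.rev) (hτ : Commute τ Fin.revPerm)
    (h : τ u < τ u.rev) : length (τ * swap u u.rev) = length τ + 1 := by
  have hinv := Perm.card_inversions_mul_swap τ hu h
  have hneg := card_negatives_mul_swap_rev hu hτ h
  have h₁ := two_mul_length (hτ.mul_left (commute_swap_rev u))
  have h₂ := two_mul_length hτ
  omega

lemma disjoint_swap_swap_rev {a a' : Fin (2 * n)} (ha : a ⋖ a') (ha' : (a' : ℕ) < n) :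
    (swap a a').Disjoint (swap a'.rev a.rev) := by
  rw [Fin.covBy_iff_val_add_one_eq] at ha
  apply Perm.disjoint_swap_swap
  simp [Fin.ext_iff, Fin.val_rev]
  omega

lemma length_mul_swap_mul_swap_rev {a a' : Fin (2 * n)} (ha : a ⋖ a') (ha' : (a' : ℕ) < n)
    (hτ : Commute τ Fin.revPerm) (h : τ a < τ a') :
    length (τ * (swap a a' * swap a'.rev a.rev)) = length τ + 1 := by
  have hval := Fin.covBy_iff_val_add_one_eq.1 ha
  have hd := disjoint_swap_swap_rev ha ha'
  have hrev : a'.rev ⋖ a.rev := by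
    rw [Fin.covBy_iff_val_add_one_eq, Fin.val_rev, Fin.val_rev]; omega
  have hfix : ∀ x ∈ [a'.rev, a.rev], (τ * swap a a') x = τ x := by
    simp only [List.mem_cons, List.not_mem_nil, or_false]
    rintro x (rfl | rfl) <;>
      rw [Perm.mul_apply, swap_apply_of_ne_of_ne] <;> simp [Fin.ext_iff, Fin.val_rev] <;> omega
  have hinv₁ := Perm.card_inversions_mul_swap τ ha h
  have hinv₂ := Perm.card_inversions_mul_swap (τ * swap a a') hrev (by
    rw [hfix _ (by simp), hfix _ (by simp), commute_revPerm_iff.1 hτ, commute_revPerm_iff.1 hτ]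
    exact Fin.rev_lt_rev.2 h)
  have hneg := card_negatives_mul_of_lt_iff (τ := τ) (swap a a' * swap a'.rev a.rev) fun p => by
    rw [Perm.mul_apply, swap_apply_val_lt_iff (by omega),
      swap_apply_val_lt_iff (by simp only [Fin.val_rev]; omega)]
  have h₁ := two_mul_length (hτ.mul_left (commute_swap_mul_swap_rev hd))
  have h₂ := two_mul_length hτ
  rw [← mul_assoc] at h₁ hneg ⊢
  omega

lemma mem_typeCGenerators_iff {g : Perm (Fin (2 * n))} :
    g ∈ typeCGenerators n ↔ (∃ u : Fin (2 * n), u ⋖ u.rev ∧ g = swap u u.rev) ∨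
      ∃ a a' : Fin (2 * n), a ⋖ a' ∧ (a' : ℕ) < n ∧
        g = swap a a' * swap a'.rev a.rev := by
  simp only [Fin.covBy_iff_val_add_one_eq, Fin.val_rev]
  constructor
  · rintro (⟨hn, rfl⟩ | ⟨i, hi, hin, hn, rfl⟩)
    · refine Or.inl ⟨⟨n - 1, by omega⟩, by simp; omega, ?_⟩
      congr 1; ext; simp [Fin.val_rev]; omega
    · refine Or.inr ⟨⟨n - i - 1, by omega⟩, ⟨n - i, by omega⟩, by simp; omega, by simp; omega,
        ?_⟩
      congr 2 <;> ext <;> simp [Fin.val_rev] <;> omega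
  · rintro (⟨u, hu, rfl⟩ | ⟨a, a', ha, ha', rfl⟩)
    · refine Or.inl ⟨by omega, ?_⟩
      congr 1 <;> ext <;> simp [Fin.val_rev] <;> omega
    · refine Or.inr ⟨n - a', by omega, by omega, by omega, ?_⟩
      congr 2 <;> ext <;> simp [Fin.val_rev] <;> omega

structure IsSimpleReflection (g : Perm (Fin (2 * n))) (a a' : Fin (2 * n)) : Prop where
  lt : a < a'
  commute : Commute g Fin.revPerm
  mul_self : g * g = 1
  apply_left : g a = a'
  length_mul : ∀ τ : Perm (Fin (2 * n)), Commute τ Fin.revPerm → τ a < τ a' →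
    length (τ * g) = length τ + 1

lemma isSimpleReflection_swap_rev {u : Fin (2 * n)} (hu : u ⋖ u.rev) :
    IsSimpleReflection (swap u u.rev) u u.rev :=
  ⟨hu.lt, commute_swap_rev u, swap_mul_self u u.rev, swap_apply_left u u.rev,
    fun _ hτ => length_mul_swap_rev hu hτ⟩

lemma isSimpleReflection_swap_mul_swap_rev {a a' : Fin (2 * n)} (ha : a ⋖ a')
    (ha' : (a' : ℕ) < n) : IsSimpleReflection (swap a a' * swap a'.rev a.rev) a a' := by
  have hd := disjoint_swap_swap_rev ha ha'
  refine ⟨ha.lt, commute_swap_mul_swap_rev hd, ?_, ?_,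
    fun _ hτ => length_mul_swap_mul_swap_rev ha ha' hτ⟩
  · rw [mul_assoc, ← mul_assoc (swap a'.rev a.rev), ← hd.commute.eq, mul_assoc, swap_mul_self,
      mul_one, swap_mul_self]
  · rw [Fin.covBy_iff_val_add_one_eq] at ha
    rw [Perm.mul_apply, swap_apply_of_ne_of_ne (x := a), swap_apply_left] <;>
      simp [Fin.ext_iff, Fin.val_rev] <;> omega

namespace IsSimpleReflection

variable {g : Perm (Fin (2 * n))} {a a' : Fin (2 * n)}

lemma length_mul_add_one (hs : IsSimpleReflection g a a') (hτ : Commute τ Fin.revPerm)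
    (h : τ a' < τ a) : length (τ * g) + 1 = length τ := by
  have hga' : g a' = a := by rw [← hs.apply_left, ← Perm.mul_apply, hs.mul_self, Perm.one_apply]
  have := hs.length_mul (τ * g) (hτ.mul_left hs.commute) (by simpa [hs.apply_left, hga'] using h)
  rwa [mul_assoc, hs.mul_self, mul_one, eq_comm] at this

lemma length_mul_le (hs : IsSimpleReflection g a a') (hτ : Commute τ Fin.revPerm) :
    length (τ * g) ≤ length τ + 1 := by
  rcases lt_or_gt_of_ne (τ.injective.ne hs.lt.ne) with h | h
  · exact (hs.length_mul τ hτ h).le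
  · have := hs.length_mul_add_one hτ h
    omega

end IsSimpleReflection

lemma exists_isSimpleReflection_of_mem {g : Perm (Fin (2 * n))} (hg : g ∈ typeCGenerators n) :
    ∃ a a', IsSimpleReflection g a a' := by
  rcases mem_typeCGenerators_iff.1 hg with ⟨u, hu, rfl⟩ | ⟨a, a', ha, ha', rfl⟩
  · exact ⟨u, u.rev, isSimpleReflection_swap_rev hu⟩
  · exact ⟨a, a', isSimpleReflection_swap_mul_swap_rev ha ha'⟩

lemma commute_revPerm_of_mem {g : Perm (Fin (2 * n))} (hg : g ∈ typeCGenerators n) :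
    Commute g Fin.revPerm :=
  let ⟨_, _, hs⟩ := exists_isSimpleReflection_of_mem hg
  hs.commute

lemma exists_mem_isSimpleReflection {a a' : Fin (2 * n)} (ha : a ⋖ a') (ha' : (a' : ℕ) ≤ n) :
    ∃ g ∈ typeCGenerators n, IsSimpleReflection g a a' := by
  rcases ha'.lt_or_eq with ha' | ha'
  · exact ⟨_, mem_typeCGenerators_iff.2 (Or.inr ⟨a, a', ha, ha', rfl⟩),
      isSimpleReflection_swap_mul_swap_rev ha ha'⟩
  · obtain rfl : a' = a.rev := by
      rw [Fin.covBy_iff_val_add_one_eq] at ha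
      ext; rw [Fin.val_rev]; omega
    exact ⟨_, mem_typeCGenerators_iff.2 (Or.inl ⟨a, ha, rfl⟩),
      isSimpleReflection_swap_rev ha⟩

lemma exists_covBy_apply_lt (hτ : Commute τ Fin.revPerm) (h1 : τ ≠ 1) :
    ∃ a a' : Fin (2 * n), a ⋖ a' ∧ (a' : ℕ) ≤ n ∧ τ a' < τ a := by
  by_contra! hasc
  have hmono : StrictMono τ := by
    refine (strictMono_iff_forall_covBy τ).2 fun a b hab => ?_
    refine lt_of_le_of_ne ?_ (τ.injective.ne hab.ne)
    by_cases hb : (b : ℕ) ≤ n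
    · exact hasc a b hab hb
    · have hval := Fin.covBy_iff_val_add_one_eq.1 hab
      have hrev : b.rev ⋖ a.rev := by
        rw [Fin.covBy_iff_val_add_one_eq, Fin.val_rev, Fin.val_rev]; omega
      have := hasc b.rev a.rev hrev (by rw [Fin.val_rev]; omega)
      rwa [commute_revPerm_iff.1 hτ, commute_revPerm_iff.1 hτ, Fin.rev_le_rev] at this
  have hid : ⇑τ = id := (hmono.range_inj strictMono_id).1 (by simp [τ.surjective.range_eq])
  exact h1 (Equiv.ext fun i => congrFun hid i)

lemma exists_mem_length_mul_add_one (hτ : Commute τ Fin.revPerm) (h1 : τ ≠ 1) :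
    ∃ g ∈ typeCGenerators n, length (τ * g) + 1 = length τ := by
  obtain ⟨a, a', ha, ha', h⟩ := exists_covBy_apply_lt hτ h1
  obtain ⟨g, hg, hs⟩ := exists_mem_isSimpleReflection ha ha'
  exact ⟨g, hg, hs.length_mul_add_one hτ h⟩

lemma length_one : length (1 : Perm (Fin (2 * n))) = 0 := by
  have hinv : (1 : Perm (Fin (2 * n))).inversions = ∅ :=
    filter_eq_empty_iff.2 fun x _ h => lt_asymm h.1 h.2
  have hneg : negatives (1 : Perm (Fin (2 * n))) = ∅ :=
    filter_eq_empty_iff.2 fun p _ h => (lt_of_lt_of_le h.1 h.2).false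
  simp [length, lowerInversions, hinv, hneg]

lemma length_inv_le_of_isProdOfGens {k : ℕ} {w : Perm (Fin (2 * n))} (h : IsProdOfGens n k w) :
    length w⁻¹ ≤ k := by
  obtain ⟨l, rfl, hl, rfl⟩ := h
  induction l with
  | nil => simp [length_one]
  | cons g l ih =>
    obtain ⟨a, a', hs⟩ := exists_isSimpleReflection_of_mem (hl g List.mem_cons_self)
    have hl' : ∀ g ∈ l, g ∈ typeCGenerators n := fun g hg => hl g (List.mem_cons_of_mem _ hg)
    have hcomm : Commute l.prod⁻¹ Fin.revPerm :=
      (Commute.list_prod_left l _ fun g hg => commute_revPerm_of_mem (hl' g hg)).inv_left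
    have := hs.length_mul_le hcomm
    rw [List.prod_cons, mul_inv_rev, inv_eq_of_mul_eq_one_right hs.mul_self, List.length_cons]
    have := ih hl'
    omega

lemma isProdOfGens_length_inv (hτ : Commute τ Fin.revPerm) :
    IsProdOfGens n (length τ) τ⁻¹ := by
  induction hlen : length τ generalizing τ with
  | zero =>
    by_cases h1 : τ = 1
    · exact ⟨[], rfl, by simp, by simp [h1]⟩
    · obtain ⟨g, -, hg⟩ := exists_mem_length_mul_add_one hτ h1
      omega
  | succ m ih =>
    have h1 : τ ≠ 1 := by rintro rfl; simp [length_one] at hlen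
    obtain ⟨g, hg, hlen'⟩ := exists_mem_length_mul_add_one hτ h1
    obtain ⟨a, a', hs⟩ := exists_isSimpleReflection_of_mem hg
    obtain ⟨l, hl, hmem, hprod⟩ := ih (hτ.mul_left hs.commute) (by omega)
    refine ⟨g :: l, by simp [hl], by simpa using ⟨hg, hmem⟩, ?_⟩
    rw [List.prod_cons, hprod, mul_inv_rev, inv_eq_of_mul_eq_one_right hs.mul_self, ← mul_assoc,
      hs.mul_self, one_mul]

lemma card_pairs_below_antidiagonal_add :
    #{x : Fin (2 * n) × Fin (2 * n) | x.1 < x.2 ∧ (x.1 : ℕ) + x.2 < 2 * n - 1} + n =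
      n ^ 2 := by
  have h := card_filter_lt_eq_two_mul_add (n := n) (fun _ _ => True) fun _ _ => Iff.rfl
  simp only [and_true] at h
  rw [Fintype.card_product_filter_lt, Fintype.card_fin, Nat.choose_two_right, mul_assoc,
    Nat.mul_div_cancel_left _ two_pos, Fin.card_filter_val_lt, min_eq_right (by omega)] at h
  generalize #{x : Fin (2 * n) × Fin (2 * n) | x.1 < x.2 ∧ (x.1 : ℕ) + x.2 < 2 * n - 1} = X
    at h ⊢
  rcases n with _ | n
  · simp at h ⊢; omega
  · rw [show 2 * (n + 1) - 1 = 2 * n + 1 by omega] at h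
    nlinarith

lemma card_filter_apply_lt_add_card_lowerInversions (τ : Perm (Fin (2 * n))) :
    #{x : Fin (2 * n) × Fin (2 * n) | (x.1 : ℕ) < x.2 ∧ (x.1 : ℕ) + x.2 < 2 * n - 1 ∧
      (τ x.1 : ℕ) < τ x.2} + #(lowerInversions τ) + n = n ^ 2 := by
  rw [← card_pairs_below_antidiagonal_add, ← card_filter_add_card_filter_not
    (s := ({x | x.1 < x.2 ∧ (x.1 : ℕ) + x.2 < 2 * n - 1} : Finset (Fin (2 * n) × Fin (2 * n))))
    (fun x => τ x.1 < τ x.2)]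
  congr 3
  · ext x
    simp only [mem_filter, mem_univ, true_and, Fin.lt_def]
    tauto
  · ext x
    simp only [lowerInversions, Perm.mem_inversions, mem_filter, mem_univ, true_and, not_lt]
    constructor
    · rintro ⟨⟨hlt, hτ⟩, hsum⟩
      exact ⟨⟨hlt, hsum⟩, hτ.le⟩
    · rintro ⟨⟨hlt, hsum⟩, hτ⟩
      exact ⟨⟨hlt, lt_of_le_of_ne hτ (τ.injective.ne hlt.ne')⟩, hsum⟩

lemma card_filter_apply_lt_add_card_negatives_inv (w : Perm (Fin (2 * n))) :
    #{i : Fin (2 * n) | (i : ℕ) < n ∧ (w i : ℕ) < n} + #(negatives w⁻¹) = n := by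
  have hcard : #{i : Fin (2 * n) | (i : ℕ) < n ∧ (w i : ℕ) < n} =
      #{p : Fin (2 * n) | (p : ℕ) < n ∧ (w⁻¹ p : ℕ) < n} :=
    card_equiv w fun i => by simp [and_comm]
  have htotal : #{p : Fin (2 * n) | (p : ℕ) < n} = n := by
    rw [Fin.card_filter_val_lt]; omega
  have hneg :
      negatives w⁻¹ = ({p | (p : ℕ) < n ∧ ¬(w⁻¹ p : ℕ) < n} : Finset (Fin (2 * n))) := by
    ext p
    simp [mem_negatives]
  rw [hcard, hneg, ← filter_filter, ← filter_filter, card_filter_add_card_filter_not, htotal]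

end TypeC

/-- For `w ∈ W(Cₙ) = {w ∈ S_{2n} : w(2n+1-i) = 2n+1-w(i)}` define
`S(w) = {(i,j) : 1 ≤ i < j < 2n+1-i, w⁻¹(i) < w⁻¹(j)}` (here written 0-indexed:
`i < j`, `i + j < 2n - 1`).  Then `|S(w)| + #{i ≤ n : w(i) ≤ n} = n² - ℓ(w)` where
`ℓ(w)` is the Coxeter length of `w` (stated additively as `… + ℓ(w) = n²`). -/
theorem card_S_add_card_fixed_eq_positives_sub_length
    (n : ℕ) (w : Equiv.Perm (Fin (2 * n)))
    (hW : ∀ i : Fin (2 * n), w i.rev = (w i).rev)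
    (k : ℕ) (hk : IsProdOfGens n k w)
    (hkmin : ∀ k' < k, ¬ IsProdOfGens n k' w) :
    (Finset.univ.filter (fun p : Fin (2 * n) × Fin (2 * n) =>
        (p.1 : ℕ) < (p.2 : ℕ) ∧ (p.1 : ℕ) + (p.2 : ℕ) < 2 * n - 1 ∧
        ((w⁻¹ p.1 : Fin (2 * n)) : ℕ) < ((w⁻¹ p.2 : Fin (2 * n)) : ℕ))).card +
      (Finset.univ.filter (fun i : Fin (2 * n) =>
        (i : ℕ) < n ∧ ((w i : Fin (2 * n)) : ℕ) < n)).card + k = n ^ 2 := by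
  have hτ : Commute w⁻¹ Fin.revPerm := (commute_revPerm_iff.2 hW).inv_left
  have hlen : TypeC.length w⁻¹ = k := by
    refine le_antisymm (TypeC.length_inv_le_of_isProdOfGens hk)
      (not_lt.1 fun hlt => hkmin _ hlt ?_)
    simpa using TypeC.isProdOfGens_length_inv hτ
  have hS := TypeC.card_filter_apply_lt_add_card_lowerInversions w⁻¹
  have hD := TypeC.card_filter_apply_lt_add_card_negatives_inv w
  rw [TypeC.length] at hlen
  omega
end

section
/- Let x be a nilpotent endomorphism of a finite-dimensional vector space V and v ∈ V. If the Jordan type of x on V determines the multiset {μ_i + ν_i, μ_i + ν_i} (each part doubled) and the Jordan type of x on V/ℂ[x]v equals (μ₁+ν₁, μ₂+ν₁, μ₂+ν₂, μ₃+ν₂, …), then the pair of partitions (μ,ν) is uniquely determined by these two Jordan types. -/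
/-- (Injectivity in the Travkin/Achar–Henderson parametrization.)
The map sending a pair of partitions `(μ,ν)` to the pair of Jordan types
`(λ ∪ λ, (μ₁+ν₁, μ₂+ν₁, μ₂+ν₂, μ₃+ν₂, …))`, where `λ = μ + ν`, is injective: if two
pairs of partitions give the same doubled type (equivalently `μ i + ν i = μ' i + ν' i`
for all `i`) and the same interlacing sequence (so also
`μ (i+1) + ν i = μ' (i+1) + ν' i` for all `i`), then `μ = μ'` and `ν = ν'`.
Partitions are encoded as antitone, eventually-zero functions `ℕ → ℕ`. -/
theorem eType_parametrization_injective
    (μ ν μ' ν' : ℕ → ℕ)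
    (hμ : Antitone μ) (hν : Antitone ν) (hμ' : Antitone μ') (hν' : Antitone ν')
    (hfin : ∃ K, ∀ i ≥ K, μ i = 0 ∧ ν i = 0 ∧ μ' i = 0 ∧ ν' i = 0)
    (hodd : ∀ i, μ i + ν i = μ' i + ν' i)
    (heven : ∀ i, μ (i + 1) + ν i = μ' (i + 1) + ν' i) :
    μ = μ' ∧ ν = ν' := by
  obtain ⟨K, hK⟩ := hfin
  -- The difference μ i - μ' i is constant in i.
  have step : ∀ i, μ (i + 1) + μ' i = μ' (i + 1) + μ i := by
    intro i
    have h1 := hodd i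
    have h2 := heven i
    omega
  have const : ∀ i, μ i + μ' 0 = μ' i + μ 0 := by
    intro i
    induction i with
    | zero => omega
    | succ n ih =>
      have := step n
      omega
  have h0 : μ 0 = μ' 0 := by
    have := const K
    have := hK K le_rfl
    omega
  have hμeq : ∀ i, μ i = μ' i := by
    intro i
    have := const i
    omega
  refine ⟨funext hμeq, funext fun i => ?_⟩
  have := hodd i
  have := hμeq i
  omega
end
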